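/- arXiv:1407.3496 — 6 statements merged into one kernel-verified Lean document; each statement's English description precedes it below -/
import Mathlib

section
/- Let S be a finite set of size n ≥ 2, and let F, G : S → R be functions into a set R with G non-constant. Equip the set Σ of total orderings of S (i.e., bijections σ : {1,...,n} → S) with the uniform probability measure. Then the probability of the event O = {σ ∈ Σ : F(σ(i)) = G(σ(i+1)) for all 1 ≤ i < n} is at most 1/(n-1). -/
open scoped Classical

/-!
An ordering `σ` of `S` determines the cyclic permutation `σ i ↦ σ (i + 1)` (indices mod `n`),
and every `n`-cycle of `S` comes from exactly `n` orderings, its rotations. Call the link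
`y ↦ π y` of a cycle broken when `F y ≠ G (π y)`. An ordering lies in the event iff every link
of its cycle except possibly the wrap-around one `σ (n - 1) ↦ σ 0` is intact. Hence a cycle with
no broken link carries `n` orderings of the event, a cycle with one broken link carries one, and
all other cycles carry none.

Cycles without broken links are rare. If `F = G` they would make `G` constant along a cycle
through all of `S`. Otherwise pick `x` with `F x ≠ G x`; moving `x` in such a cycle to right after
any of the `n - 2` points other than `x` and its predecessor breaks at least two links, and the
resulting cycles are pairwise distinct. So `(n - 2) · #(unbroken cycles) ≤ #(cycles with at least
two broken links)`, and therefore `(n - 1) · #(event) ≤ n · #(n-cycles) = n!`.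
-/

open Equiv Finset

namespace Equiv.Perm

variable {α : Type*} {π ρ : Perm α}

theorem IsCycleOn.eq_univ_of_mapsTo [Finite α] (hπ : π.IsCycleOn .univ) {D : Set α}
    (hD : Set.MapsTo π D D) (hne : D.Nonempty) : D = .univ := by
  obtain ⟨a, ha⟩ := hne
  refine Set.eq_univ_of_forall fun b => ?_
  obtain ⟨i, rfl⟩ := hπ.exists_pow_eq' Set.finite_univ (Set.mem_univ a) (Set.mem_univ b)
  exact hD.perm_pow i ha

theorem IsCycleOn.eq_of_invariant {β : Type*} [Finite α] (hπ : π.IsCycleOn .univ)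
    {G : α → β} (hG : ∀ x, G (π x) = G x) (a b : α) : G a = G b := by
  have := hπ.eq_univ_of_mapsTo (D := {y | G y = G a}) (fun y hy => (hG y).trans hy) ⟨a, rfl⟩
  exact (this ▸ Set.mem_univ b : b ∈ {y | G y = G a}).symm

theorem SameCycle.of_forall_sameCycle_apply [Finite α] (h : ∀ y, ρ.SameCycle y (π y))
    {a b : α} (hab : π.SameCycle a b) : ρ.SameCycle a b := by
  obtain ⟨i, -, rfl⟩ := hab.exists_pow_eq'
  clear hab
  induction i with
  | zero => exact SameCycle.refl _ _
  | succ i ih => exact ih.trans (by rw [pow_succ', mul_apply]; exact h _)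

/-- In cycle notation `π.moveAfter x z` turns `(… p x a … z b …)` into `(… p a … z x b …)`. -/
noncomputable def moveAfter (π : Perm α) (x z : α) : Perm α := π * swap (π⁻¹ x) x * swap x z

section moveAfter

variable {x y z : α}

theorem moveAfter_apply_right : π.moveAfter x z z = x := by
  simp [moveAfter]

theorem moveAfter_apply_left (hzx : z ≠ x) (hz : π z ≠ x) : π.moveAfter x z x = π z := by
  have : z ≠ π⁻¹ x := fun h => hz (by simp [h])
  rw [moveAfter, mul_apply, mul_apply, swap_apply_left, swap_apply_of_ne_of_ne this hzx]

theorem moveAfter_apply_inv_apply (hx : π x ≠ x) (hz : π z ≠ x) :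
    π.moveAfter x z (π⁻¹ x) = π x := by
  have h1 : π⁻¹ x ≠ x := fun h => hx (by simpa using congrArg π h.symm)
  have h2 : π⁻¹ x ≠ z := fun h => hz (by simp [← h])
  rw [moveAfter, mul_apply, mul_apply, swap_apply_of_ne_of_ne h1 h2, swap_apply_left]

theorem moveAfter_apply_of_ne (hyx : y ≠ x) (hyz : y ≠ z) (hy : π y ≠ x) :
    π.moveAfter x z y = π y := by
  have : y ≠ π⁻¹ x := fun h => hy (by simp [h])
  rw [moveAfter, mul_apply, mul_apply, swap_apply_of_ne_of_ne hyx hyz,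
    swap_apply_of_ne_of_ne this hyx]

theorem IsCycleOn.moveAfter [Finite α] (hπ : π.IsCycleOn .univ) (hzx : z ≠ x)
    (hz : π z ≠ x) : (π.moveAfter x z).IsCycleOn .univ := by
  set ρ := π.moveAfter x z
  have hx : π x ≠ x := hπ.apply_ne ⟨x, trivial, z, trivial, hzx.symm⟩ trivial
  have hρz : ρ z = x := moveAfter_apply_right
  have hρx : ρ x = π z := moveAfter_apply_left hzx hz
  -- Otherwise the `ρ`-cycle of `x`, minus `x` itself, would be a proper `π`-invariant set.
  have hxp : ρ.SameCycle x (π⁻¹ x) := by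
    by_contra hxp
    have hD := hπ.eq_univ_of_mapsTo (D := {y | ρ.SameCycle x y ∧ y ≠ x}) ?_
      ⟨z, (hρz ▸ sameCycle_apply_right.2 (SameCycle.refl ρ z) : ρ.SameCycle z x).symm, hzx⟩
    · exact (hD ▸ Set.mem_univ x : x ∈ {y | ρ.SameCycle x y ∧ y ≠ x}).2 rfl
    rintro y ⟨hy, hyx⟩
    have hyp : π y ≠ x := fun h => hxp (Perm.eq_inv_iff_eq.2 h ▸ hy)
    refine ⟨?_, hyp⟩
    by_cases hyz : y = z
    · subst hyz
      exact hρx ▸ sameCycle_apply_right.2 (SameCycle.refl _ _)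
    · exact moveAfter_apply_of_ne hyx hyz hyp ▸ sameCycle_apply_right.2 hy
  have step : ∀ y, ρ.SameCycle y (π y) := by
    intro y
    by_cases hyp : π y = x
    · rw [hyp, Perm.eq_inv_iff_eq.2 hyp]
      exact hxp.symm
    by_cases hyx : y = x
    · subst hyx
      exact moveAfter_apply_inv_apply hx hz ▸ sameCycle_apply_right.2 hxp
    by_cases hyz : y = z
    · subst hyz
      rw [← hρx, sameCycle_apply_right, ← hρz, sameCycle_apply_right]
    · exact moveAfter_apply_of_ne hyx hyz hyp ▸ sameCycle_apply_right.2 (SameCycle.refl _ _)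
  exact ⟨Set.bijOn_univ.2 ρ.bijective, fun a _ b _ =>
    SameCycle.of_forall_sameCycle_apply step (hπ.2 trivial trivial)⟩

end moveAfter

end Equiv.Perm

section CyclicSucc

open Fin.NatCast Fin.CommRing

variable {n : ℕ} {S : Type*}

def cyclicSucc (σ : Fin n ≃ S) : Perm S := σ.permCongr (finRotate n)

variable [NeZero n]

def rotate (σ : Fin n ≃ S) (k : Fin n) : Fin n ≃ S := (Equiv.addRight k).trans σ

theorem rotate_apply (σ : Fin n ≃ S) (k i : Fin n) : rotate σ k i = σ (i + k) := rfl

theorem rotate_injective (σ : Fin n ≃ S) : Function.Injective (rotate σ) := fun k l h => by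
  simpa [rotate_apply] using congrArg (fun τ => σ.symm (τ 0)) h

theorem cyclicSucc_apply (σ : Fin n ≃ S) (i : Fin n) : cyclicSucc σ (σ i) = σ (i + 1) := by
  simp [cyclicSucc, finRotate_apply]

theorem cyclicSucc_pow_apply (σ : Fin n ≃ S) (i : Fin n) (m : ℕ) :
    (cyclicSucc σ ^ m) (σ i) = σ (i + m) := by
  induction m with
  | zero => simp
  | succ m ih => rw [pow_succ', Perm.mul_apply, ih, cyclicSucc_apply]; push_cast; ring_nf

theorem isCycleOn_cyclicSucc (σ : Fin n ≃ S) : (cyclicSucc σ).IsCycleOn .univ := by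
  refine ⟨Set.bijOn_univ.2 (cyclicSucc σ).bijective, fun x _ y _ => ?_⟩
  obtain ⟨i, rfl⟩ := σ.surjective x
  obtain ⟨j, rfl⟩ := σ.surjective y
  refine ⟨((j - i : Fin n) : ℕ), ?_⟩
  rw [zpow_natCast, cyclicSucc_pow_apply, Fin.cast_val_eq_self, add_sub_cancel]

theorem cyclicSucc_rotate (σ : Fin n ≃ S) (k : Fin n) :
    cyclicSucc (rotate σ k) = cyclicSucc σ := by
  ext x
  obtain ⟨i, rfl⟩ := (rotate σ k).surjective x
  rw [cyclicSucc_apply, rotate_apply, rotate_apply, cyclicSucc_apply, add_right_comm]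

theorem exists_rotate_eq_of_cyclicSucc_eq {σ τ : Fin n ≃ S}
    (h : cyclicSucc τ = cyclicSucc σ) : ∃ k, rotate σ k = τ := by
  refine ⟨σ.symm (τ 0), Equiv.ext fun i => ?_⟩
  rw [rotate_apply, ← Fin.cast_val_eq_self i]
  induction (i : ℕ) with
  | zero => simp
  | succ m ih =>
    push_cast
    rw [← cyclicSucc_apply, h, ← ih, cyclicSucc_apply, add_right_comm]

variable [Fintype S]

theorem exists_cyclicSucc_eq (hS : Fintype.card S = n) {π : Perm S}
    (hπ : π.IsCycleOn .univ) : ∃ σ : Fin n ≃ S, cyclicSucc σ = π := by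
  have hπ' : π.IsCycleOn (univ : Finset S) := by simpa using hπ
  obtain ⟨x⟩ : Nonempty S := Fintype.card_pos_iff.1 (hS ▸ Nat.pos_of_neZero n)
  have hmod {a b : ℕ} : (π ^ a) x = (π ^ b) x ↔ a ≡ b [MOD n] := by
    rw [hπ'.pow_apply_eq_pow_apply (mem_univ x), card_univ, hS]
  have hinj : Function.Injective fun i : Fin n => (π ^ (i : ℕ)) x := fun i j h =>
    Fin.ext ((hmod.1 h).eq_of_lt_of_lt i.isLt j.isLt)
  let σ := Equiv.ofBijective _ ((Fintype.bijective_iff_injective_and_card _).2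
    ⟨hinj, by rw [Fintype.card_fin, hS]⟩)
  refine ⟨σ, Equiv.ext fun y => ?_⟩
  obtain ⟨i, rfl⟩ := σ.surjective y
  rw [cyclicSucc_apply]
  show (π ^ ((i + 1 : Fin n) : ℕ)) x = π ((π ^ (i : ℕ)) x)
  rw [← Perm.mul_apply, ← pow_succ', hmod, Fin.val_add, Fin.val_one']
  exact (Nat.mod_modEq _ _).trans ((Nat.mod_modEq _ _).add_left _)

theorem card_filter_cyclicSucc_eq (hS : Fintype.card S = n) {π : Perm S}
    (hπ : π.IsCycleOn .univ) : #{τ : Fin n ≃ S | cyclicSucc τ = π} = n := by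
  obtain ⟨σ, rfl⟩ := exists_cyclicSucc_eq hS hπ
  have : ({τ | cyclicSucc τ = cyclicSucc σ} : Finset (Fin n ≃ S)) = univ.image (rotate σ) := by
    ext τ
    simp only [mem_filter, mem_univ, true_and, mem_image]
    exact ⟨exists_rotate_eq_of_cyclicSucc_eq, fun ⟨k, hk⟩ => hk ▸ cyclicSucc_rotate σ k⟩
  rw [this, card_image_of_injective _ (rotate_injective σ), card_univ, Fintype.card_fin]

end CyclicSucc

section Links

variable {S R : Type*}

def LinksHold (F G : S → R) {n : ℕ} (σ : Fin n ≃ S) : Prop :=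
  ∀ i j : Fin n, (j : ℕ) = i + 1 → F (σ i) = G (σ j)

noncomputable def brokenLinks [Fintype S] (F G : S → R) (π : Perm S) : Finset S :=
  {x | F x ≠ G (π x)}

variable {F G : S → R}

theorem apply_ne_self_of_forall_eq {π : Perm S} {x : S} (hπ : ∀ y, F y = G (π y))
    (hx : F x ≠ G x) : π x ≠ x :=
  fun h => hx (by rw [hπ x, h])

theorem eq_of_moveAfter_eq {π π' : Perm S} {x z : S} (hπ : ∀ y, F y = G (π y))
    (hπ' : ∀ y, F y = G (π' y)) (hx : F x ≠ G x) (hz' : π' z ≠ x)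
    (h : π.moveAfter x z = π'.moveAfter x z) : π = π' := by
  have hπ'x : π' x ≠ x := apply_ne_self_of_forall_eq hπ' hx
  -- Otherwise `π` keeps the link out of `p' = π'⁻¹ x`, so `π p' = π' x`, and the intact links
  -- of `π` and `π'` at `p'` force `F x = G x`.
  have hinv : π⁻¹ x = π'⁻¹ x := by
    by_contra hne
    set p' := π'⁻¹ x
    have hp' : π' p' = x := by simp [p']
    have hp'x : p' ≠ x := fun h => hπ'x (h ▸ hp')
    have hp'z : p' ≠ z := fun h => hz' (by simp [p', ← h])
    have hπp' : π p' ≠ x := fun h => hne (Perm.eq_inv_iff_eq.2 h).symm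
    have key : π p' = π' x := by
      rw [← Perm.moveAfter_apply_of_ne hp'x hp'z hπp', h,
        Perm.moveAfter_apply_inv_apply hπ'x hz']
    apply hx
    rw [hπ' x, ← key, ← hπ p', hπ' p', hp']
  unfold Perm.moveAfter at h
  rw [hinv] at h
  exact mul_right_cancel (mul_right_cancel h)

variable [Fintype S]

theorem mem_brokenLinks {π : Perm S} {x : S} : x ∈ brokenLinks F G π ↔ F x ≠ G (π x) := by
  simp [brokenLinks]

theorem brokenLinks_eq_empty_iff {π : Perm S} :
    brokenLinks F G π = ∅ ↔ ∀ x, F x = G (π x) := by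
  simp [brokenLinks, filter_eq_empty_iff]

theorem two_le_card_brokenLinks_moveAfter {π : Perm S} {x z : S} (hπ : ∀ y, F y = G (π y))
    (hx : F x ≠ G x) (hzx : z ≠ x) (hz : π z ≠ x) :
    2 ≤ #(brokenLinks F G (π.moveAfter x z)) := by
  have hπx : π x ≠ x := apply_ne_self_of_forall_eq hπ hx
  have hpx : π⁻¹ x ≠ x := fun h => hπx (Perm.inv_eq_iff_eq.1 h).symm
  have hpz : π⁻¹ x ≠ z := fun h => hz (by simp [← h])
  have hp : π⁻¹ x ∈ brokenLinks F G (π.moveAfter x z) := by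
    rw [mem_brokenLinks, Perm.moveAfter_apply_inv_apply hπx hz, ← hπ, hπ (π⁻¹ x)]
    simpa using hx.symm
  -- `x` now sits between `z` and `π z`, and `G x ≠ F x` breaks one of these two links.
  have hzx' : z ∈ brokenLinks F G (π.moveAfter x z) ∨ x ∈ brokenLinks F G (π.moveAfter x z) := by
    by_contra! h
    simp only [mem_brokenLinks, not_not, Perm.moveAfter_apply_right,
      Perm.moveAfter_apply_left hzx hz, ← hπ z] at h
    exact hx (h.2.trans h.1)
  rcases hzx' with h | h
  · exact one_lt_card.2 ⟨_, hp, _, h, hpz⟩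
  · exact one_lt_card.2 ⟨_, hp, _, h, hpx⟩

theorem linksHold_iff_brokenLinks_subset {m : ℕ} (σ : Fin (m + 1) ≃ S) :
    LinksHold F G σ ↔ brokenLinks F G (cyclicSucc σ) ⊆ {σ (Fin.last m)} := by
  simp only [subset_iff, mem_brokenLinks, mem_singleton]
  constructor
  · intro h y hy
    obtain ⟨i, rfl⟩ := σ.surjective y
    rw [cyclicSucc_apply] at hy
    by_contra hi
    exact hy (h i (i + 1) (by rw [Fin.val_add_one, if_neg fun h' => hi (by rw [h'])]))
  · intro h i j hij
    have hi : i ≠ Fin.last m := by rintro rfl; have := j.isLt; simp at hij; omega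
    have hj : j = i + 1 := Fin.ext (by rw [Fin.val_add_one, if_neg hi, hij])
    by_contra hne
    exact hi (σ.injective (h (by rw [cyclicSucc_apply, ← hj]; exact hne)))

theorem card_filter_linksHold_cyclicSucc_eq_le_one {m : ℕ} {π : Perm S}
    (hπ : (brokenLinks F G π).Nonempty) :
    #{σ : Fin (m + 1) ≃ S | LinksHold F G σ ∧ cyclicSucc σ = π} ≤ 1 := by
  refine card_le_one.2 fun σ hσ τ hτ => ?_
  simp only [mem_filter, mem_univ, true_and] at hσ hτ
  obtain ⟨k, rfl⟩ := exists_rotate_eq_of_cyclicSucc_eq (hτ.2.trans hσ.2.symm)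
  obtain ⟨y, hy⟩ := hπ
  have h1 := (linksHold_iff_brokenLinks_subset σ).1 hσ.1 (hσ.2 ▸ hy)
  have h2 := (linksHold_iff_brokenLinks_subset _).1 hτ.1 (hτ.2 ▸ hy)
  rw [mem_singleton] at h1 h2
  rw [h1, rotate_apply] at h2
  obtain rfl : k = 0 := by simpa using σ.injective h2
  ext i
  simp [rotate_apply]

theorem not_linksHold_of_two_le_card_brokenLinks {m : ℕ} {σ : Fin (m + 1) ≃ S}
    (h : 2 ≤ #(brokenLinks F G (cyclicSucc σ))) : ¬ LinksHold F G σ := fun hσ => by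
  have := card_le_card ((linksHold_iff_brokenLinks_subset σ).1 hσ)
  rw [card_singleton] at this
  omega

end Links

section Counting

variable {S R : Type*} [Fintype S] {F G : S → R}

variable (S) in
noncomputable def fullCycles : Finset (Perm S) := {π | π.IsCycleOn .univ}

theorem mem_fullCycles {π : Perm S} : π ∈ fullCycles S ↔ π.IsCycleOn .univ := by
  simp [fullCycles]

theorem card_equiv_eq_mul_card_fullCycles {n : ℕ} [NeZero n] (hS : Fintype.card S = n) :
    Fintype.card (Fin n ≃ S) = n * #(fullCycles S) := by
  rw [← card_univ, card_eq_sum_card_fiberwise (f := cyclicSucc) (t := fullCycles S)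
    fun σ _ => mem_fullCycles.2 (isCycleOn_cyclicSucc σ),
    sum_congr rfl fun π hπ => card_filter_cyclicSucc_eq hS (mem_fullCycles.1 hπ),
    sum_const, smul_eq_mul, mul_comm]

theorem card_filter_empty_add_card_filter_card_eq_one_add_card_filter_two_le {α β : Type*}
    (s : Finset α) (t : α → Finset β) :
    #{a ∈ s | t a = ∅} + #{a ∈ s | #(t a) = 1} + #{a ∈ s | 2 ≤ #(t a)} = #s := by
  simp only [card_filter, ← sum_add_distrib, card_eq_sum_ones s]
  refine sum_congr rfl fun a _ => ?_
  simp only [← card_eq_zero]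
  split_ifs <;> omega

theorem card_linksHold_le {m : ℕ} (hS : Fintype.card S = m + 1) :
    #{σ : Fin (m + 1) ≃ S | LinksHold F G σ} ≤
      (m + 1) * #{π ∈ fullCycles S | brokenLinks F G π = ∅} +
        #{π ∈ fullCycles S | #(brokenLinks F G π) = 1} := by
  rw [card_eq_sum_card_fiberwise (f := cyclicSucc) (t := fullCycles S)
    fun σ _ => mem_fullCycles.2 (isCycleOn_cyclicSucc σ), card_filter, card_filter, mul_sum,
    ← sum_add_distrib]
  refine sum_le_sum fun π hπ => ?_
  rw [filter_filter]
  by_cases h0 : brokenLinks F G π = ∅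
  · calc _ ≤ #{τ : Fin (m + 1) ≃ S | cyclicSucc τ = π} := card_le_card fun σ hσ => by
          simp only [mem_filter, mem_univ, true_and] at hσ ⊢
          exact hσ.2
      _ = m + 1 := card_filter_cyclicSucc_eq hS (mem_fullCycles.1 hπ)
      _ ≤ _ := by simp [h0]
  by_cases h1 : #(brokenLinks F G π) = 1
  · simpa [h0, h1] using card_filter_linksHold_cyclicSucc_eq_le_one (nonempty_iff_ne_empty.2 h0)
  · have h2 : 2 ≤ #(brokenLinks F G π) := by
      have := card_pos.2 (nonempty_iff_ne_empty.2 h0)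
      omega
    simp only [h0, h1, if_false, mul_zero, add_zero, nonpos_iff_eq_zero, card_eq_zero,
      filter_eq_empty_iff]
    rintro σ - ⟨hσ, rfl⟩
    exact not_linksHold_of_two_le_card_brokenLinks h2 hσ

theorem filter_brokenLinks_eq_empty_eq_empty (hG : ¬ ∀ a b : S, G a = G b)
    (hFG : ∀ x, F x = G x) : {π ∈ fullCycles S | brokenLinks F G π = ∅} = ∅ := by
  refine filter_eq_empty_iff.2 fun π hπ hπb => hG ?_
  rw [brokenLinks_eq_empty_iff] at hπb
  exact (mem_fullCycles.1 hπ).eq_of_invariant fun x => (hπb x).symm.trans (hFG x)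

theorem card_sub_two_mul_card_le_of_ne {x : S} (hx : F x ≠ G x) :
    (Fintype.card S - 2) * #{π ∈ fullCycles S | brokenLinks F G π = ∅} ≤
      #{π ∈ fullCycles S | 2 ≤ #(brokenLinks F G π)} := by
  let Z : Perm S → Finset S := fun π => univ \ {x, π⁻¹ x}
  have hZ {π : Perm S} {z : S} (hz : z ∈ Z π) : z ≠ x ∧ π z ≠ x := by
    simp only [Z, mem_sdiff, mem_univ, mem_insert, mem_singleton, true_and, not_or] at hz
    exact ⟨hz.1, fun h => hz.2 (by simp [← h])⟩
  calc (Fintype.card S - 2) * #{π ∈ fullCycles S | brokenLinks F G π = ∅}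
      = #({π ∈ fullCycles S | brokenLinks F G π = ∅}.sigma Z) := by
        rw [card_sigma, sum_const_nat fun π hπ => ?_, mul_comm]
        have hπx : π⁻¹ x ≠ x := fun h => (apply_ne_self_of_forall_eq
          (brokenLinks_eq_empty_iff.1 (mem_filter.1 hπ).2) hx) (Perm.inv_eq_iff_eq.1 h).symm
        rw [card_univ_sdiff, card_pair hπx.symm]
    _ ≤ #{π ∈ fullCycles S | 2 ≤ #(brokenLinks F G π)} := by
        refine card_le_card_of_injOn (fun p => p.1.moveAfter x p.2) ?_ ?_
        · rintro ⟨π, z⟩ hπz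
          simp only [coe_sigma, Set.mem_sigma_iff, coe_filter, Set.mem_ofPred_eq, mem_fullCycles,
            brokenLinks_eq_empty_iff] at hπz
          obtain ⟨hzx, hz⟩ := hZ hπz.2
          simp only [coe_filter, Set.mem_ofPred_eq, mem_fullCycles]
          exact ⟨hπz.1.1.moveAfter hzx hz, two_le_card_brokenLinks_moveAfter hπz.1.2 hx hzx hz⟩
        · rintro ⟨π, z⟩ hπz ⟨π', z'⟩ hπz' h
          simp only [coe_sigma, Set.mem_sigma_iff, coe_filter, Set.mem_ofPred_eq,
            brokenLinks_eq_empty_iff] at hπz hπz' h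
          obtain rfl : z = z' := (π.moveAfter x z).injective
            (by rw [Perm.moveAfter_apply_right, h, Perm.moveAfter_apply_right])
          obtain rfl := eq_of_moveAfter_eq hπz.1.2 hπz'.1.2 hx (hZ hπz'.2).2 h
          rfl

theorem card_sub_two_mul_card_le (hG : ¬ ∀ a b : S, G a = G b) :
    (Fintype.card S - 2) * #{π ∈ fullCycles S | brokenLinks F G π = ∅} ≤
      #{π ∈ fullCycles S | 2 ≤ #(brokenLinks F G π)} := by
  by_cases hFG : ∀ x, F x = G x
  · simp [filter_brokenLinks_eq_empty_eq_empty hG hFG]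
  · obtain ⟨x, hx⟩ := not_forall.1 hFG
    exact card_sub_two_mul_card_le_of_ne hx

theorem two_le_card_of_not_forall_eq (hG : ¬ ∀ a b : S, G a = G b) : 2 ≤ Fintype.card S := by
  push Not at hG
  obtain ⟨a, b, hab⟩ := hG
  exact Fintype.one_lt_card_iff.2 ⟨a, b, fun h => hab (h ▸ rfl)⟩

theorem sub_one_mul_card_linksHold_le {n : ℕ} (hS : Fintype.card S = n)
    (hG : ¬ ∀ a b : S, G a = G b) :
    (n - 1) * #{σ : Fin n ≃ S | LinksHold F G σ} ≤ Fintype.card (Fin n ≃ S) := by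
  obtain ⟨m, rfl⟩ : ∃ m, n = m + 1 + 1 :=
    ⟨n - 2, by have := two_le_card_of_not_forall_eq hG; omega⟩
  have hcard := card_equiv_eq_mul_card_fullCycles hS
  have hO := card_linksHold_le (F := F) (G := G) hS
  have hPf := card_sub_two_mul_card_le (F := F) hG
  have hsplit := card_filter_empty_add_card_filter_card_eq_one_add_card_filter_two_le
    (fullCycles S) (brokenLinks F G)
  rw [hS, show m + 1 + 1 - 2 = m by omega] at hPf
  rw [show m + 1 + 1 - 1 = m + 1 by omega, hcard]
  nlinarith

end Counting

theorem stmt_0_general {S R : Type*} [Fintype S] (n : ℕ)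
    (hcard : Fintype.card S = n) (F G : S → R)
    (hG : ¬ ∀ a b : S, G a = G b) :
    ((Finset.univ.filter (fun σ : Fin n ≃ S =>
        ∀ i j : Fin n, (j : ℕ) = (i : ℕ) + 1 → F (σ i) = G (σ j))).card : ℝ)
      / (Fintype.card (Fin n ≃ S) : ℝ) ≤ 1 / ((n : ℝ) - 1) := by
  have hn : 2 ≤ n := hcard ▸ two_le_card_of_not_forall_eq hG
  have hpos : 0 < Fintype.card (Fin n ≃ S) :=
    Fintype.card_pos_iff.2 ⟨(Fintype.equivFinOfCardEq hcard).symm⟩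
  rw [div_le_div_iff₀ (by exact_mod_cast hpos) (by rify at hn; linarith), one_mul, mul_comm,
    ← Nat.cast_one, ← Nat.cast_sub (by omega), ← Nat.cast_mul, Nat.cast_le]
  convert sub_one_mul_card_linksHold_le (F := F) hcard hG using 3
  exact filter_congr fun _ _ => Iff.rfl

/-- Lemma 3.3 (key combinatorial estimate): if `S` has `n ≥ 2` elements, `F, G : S → R`
with `G` non-constant, and the set of total orderings of `S` (bijections `Fin n ≃ S`)
carries the uniform probability measure, then the probability of the event
`O = {σ : F(σ i) = G(σ (i+1)) for all 1 ≤ i < n}` is at most `1/(n-1)`. -/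
theorem stmt_0 {S R : Type*} [Fintype S] (n : ℕ) (hn : 2 ≤ n)
    (hcard : Fintype.card S = n) (F G : S → R)
    (hG : ¬ ∀ a b : S, G a = G b) :
    ((Finset.univ.filter (fun σ : Fin n ≃ S =>
        ∀ i j : Fin n, (j : ℕ) = (i : ℕ) + 1 → F (σ i) = G (σ j))).card : ℝ)
      / (Fintype.card (Fin n ≃ S) : ℝ) ≤ 1 / ((n : ℝ) - 1) :=
  stmt_0_general n hcard F G hG
end

section
/- Let G = (V, E) be a finite directed multigraph with n edges in which every vertex has out-degree equal to in-degree, and suppose the out-degrees are not all concentrated at one vertex (i.e., every vertex has out-degree at most n-1). Then the number of Eulerian circuits of G (as edge sequences up to choice of starting edge, i.e., circuits with a fixed starting edge) is at most (n-2)!. -/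
/-!
If some edge `f ≠ e₀` is not a loop, deleting `e₀` and `f` from a circuit starting with `e₀`
leaves an arrangement of the remaining `n - 2` edges, and this is injective: were `f` insertable
at two positions `p < p'` of the same arrangement, the edges at positions `p - 1` and `p + 1` of
the first circuit would be consecutive in the second, forcing `src f = rng f`.
Otherwise every edge but `e₀` is a loop, so a circuit never leaves one vertex, whose out-degree
would then be `n`.
-/

open scoped Classical

open Finset Fin

section
variable {V E : Type*} (src rng : E → V)

def IsWalk {k : ℕ} (w : Fin k → E) : Prop :=
  ∀ i j : Fin k, (j : ℕ) = i + 1 → rng (w i) = src (w j)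

def IsClosedWalk {k : ℕ} (w : Fin k → E) : Prop :=
  ∀ i j : Fin k, (j : ℕ) = (i + 1) % k → rng (w i) = src (w j)

variable {src rng}

theorem IsClosedWalk.isWalk {k : ℕ} {w : Fin k → E} (hw : IsClosedWalk src rng w) :
    IsWalk src rng w := fun i j hij => hw i j (by rw [Nat.mod_eq_of_lt (by omega)]; exact hij)

theorem IsClosedWalk.src_eq_rng_zero {k : ℕ} {w : Fin (k + 1) → E} (hw : IsClosedWalk src rng w)
    (hloop : ∀ i ≠ 0, src (w i) = rng (w i)) (i : Fin (k + 1)) : src (w i) = rng (w 0) := by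
  have hrng : ∀ i, rng (w i) = rng (w 0) := by
    intro i
    induction i using Fin.induction with
    | zero => rfl
    | succ i ih => rw [← hloop _ (succ_ne_zero i), ← hw.isWalk i.castSucc i.succ (by simp), ih]
  rcases eq_or_ne i 0 with rfl | hi
  · rw [← hw (last k) 0 (by simp), hrng]
  · rw [hloop i hi, hrng]

theorem IsWalk.src_eq_rng_of_removeNth_eq {m : ℕ} {w w' : Fin (m + 2) → E} {p p' : Fin (m + 2)}
    {f : E} (hw : IsWalk src rng w) (hw' : IsWalk src rng w') (hp : p ≠ 0) (hpp' : p < p')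
    (hwp : w p = f) (h : removeNth p w = removeNth p' w') : src f = rng f := by
  have hp0 : 0 < (p : ℕ) := Fin.pos_iff_ne_zero.2 hp
  have hpp'_val : (p : ℕ) < p' := Fin.lt_def.1 hpp'
  obtain ⟨k, hk⟩ : ∃ k : Fin (m + 1), (k : ℕ) + 1 = p := ⟨⟨p - 1, by omega⟩, Nat.sub_add_cancel hp0⟩
  obtain ⟨k', hk'⟩ : ∃ k' : Fin (m + 1), (k' : ℕ) = p := ⟨⟨p, by omega⟩, rfl⟩
  have hwk : w' k.castSucc = w k.castSucc := by
    have hkp : k.castSucc < p := Fin.lt_def.2 (by simp only [val_castSucc]; omega)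
    simpa [removeNth_apply, succAbove_of_castSucc_lt p k hkp,
      succAbove_of_castSucc_lt p' k (hkp.trans hpp')] using (congr_fun h k).symm
  have hwk' : w' k'.castSucc = w k'.succ := by
    have hkp : p ≤ k'.castSucc := Fin.le_def.2 (by simp only [val_castSucc]; omega)
    have hkp' : k'.castSucc < p' := Fin.lt_def.2 (by simp only [val_castSucc]; omega)
    simpa [removeNth_apply, succAbove_of_le_castSucc p k' hkp,
      succAbove_of_castSucc_lt p' k' hkp'] using (congr_fun h k').symm
  calc src f = rng (w k.castSucc) := by rw [← hwp, hw k.castSucc p (by simp only [val_castSucc]; omega)]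
    _ = src (w k'.succ) := by rw [← hwk, hw' k.castSucc k'.castSucc (by simp only [val_castSucc]; omega), hwk']
    _ = rng f := by rw [← hwp, hw p k'.succ (by simp only [val_succ]; omega)]

theorem IsWalk.eq_of_tail_removeNth_eq {m : ℕ} {w w' : Fin (m + 2) → E} {p p' : Fin (m + 2)}
    {f : E} (hf : src f ≠ rng f) (hw : IsWalk src rng w) (hw' : IsWalk src rng w')
    (h0 : w 0 = w' 0) (hp : p ≠ 0) (hp' : p' ≠ 0) (hwp : w p = f) (hwp' : w' p' = f)
    (h : tail (removeNth p w) = tail (removeNth p' w')) : w = w' := by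
  have hrem : removeNth p w = removeNth p' w' := by
    rw [← cons_self_tail (removeNth p w), ← cons_self_tail (removeNth p' w'), h, removeNth_apply,
      removeNth_apply, succAbove_ne_zero_zero hp, succAbove_ne_zero_zero hp', h0]
  rcases lt_trichotomy p p' with hlt | rfl | hgt
  · exact absurd (hw.src_eq_rng_of_removeNth_eq hw' hp hlt hwp hrem) hf
  · exact (eq_insertNth_iff.2 ⟨hwp, rfl⟩).trans (eq_insertNth_iff.2 ⟨hwp', hrem.symm⟩).symm
  · exact absurd (hw'.src_eq_rng_of_removeNth_eq hw hp' hgt hwp' hrem.symm) hf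

theorem card_le_factorial_of_src_ne_rng [Fintype E] {m : ℕ} {e₀ f : E}
    (hcard : Fintype.card E = m + 2) (hfe : f ≠ e₀) (hf : src f ≠ rng f)
    (T : Finset (Fin (m + 2) ≃ E)) (hT : ∀ σ ∈ T, σ 0 = e₀ ∧ IsClosedWalk src rng σ) :
    #T ≤ m.factorial := by
  set S : Finset E := {e₀, f}ᶜ
  have hS : #S = m := by rw [card_compl, card_pair hfe.symm, hcard]; rfl
  have hpos : ∀ σ ∈ T, σ.symm f ≠ 0 := fun σ hσ h =>
    hfe (by rw [← σ.apply_symm_apply f, h, (hT σ hσ).1])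
  have hmem : ∀ σ ∈ T, ∀ i : Fin m, σ ((σ.symm f).succAbove i.succ) ∈ S := by
    intro σ hσ i
    simp only [S, mem_compl, mem_insert, mem_singleton, not_or, ← (hT σ hσ).1,
      σ.injective.eq_iff, ← σ.eq_symm_apply]
    exact ⟨succAbove_ne_zero (hpos σ hσ) (succ_ne_zero i), succAbove_ne _ _⟩
  let reduce : T → (Fin m ↪ S) := fun σ =>
    ((succEmb m).trans ((σ.1.symm f).succAboveEmb.trans σ.1.toEmbedding)).codRestrict
      (S : Set E) (hmem σ.1 σ.2)
  have hreduce : Function.Injective reduce := by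
    rintro ⟨σ, hσ⟩ ⟨σ', hσ'⟩ h
    refine Subtype.ext (Equiv.coe_fn_injective ?_)
    refine (hT σ hσ).2.isWalk.eq_of_tail_removeNth_eq hf (hT σ' hσ').2.isWalk
      ((hT σ hσ).1.trans (hT σ' hσ').1.symm) (hpos σ hσ) (hpos σ' hσ') (σ.apply_symm_apply f)
      (σ'.apply_symm_apply f) (funext fun i => ?_)
    exact congrArg Subtype.val (DFunLike.congr_fun h i)
  calc #T = Fintype.card T := (Fintype.card_coe T).symm
    _ ≤ Fintype.card (Fin m ↪ S) := Fintype.card_le_of_injective reduce hreduce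
    _ = m.factorial := by rw [Fintype.card_embedding_eq, Fintype.card_fin, Fintype.card_coe, hS,
      Nat.descFactorial_self]

end

/-- In a finite directed multigraph with `n` edges in which every vertex has out-degree
equal to in-degree and every out-degree is at most `n - 1`, the number of Eulerian
circuits with a fixed starting edge `e₀` is at most `(n-2)!`. -/
theorem stmt_1 {V E : Type*} [Fintype E]
    (src rng : E → V) (n : ℕ) (hn : 2 ≤ n) (hcard : Fintype.card E = n)
    (hdeg : ∀ v : V, (Finset.univ.filter (fun e => src e = v)).card ≤ n - 1)
    (e₀ : E) :
    (Finset.univ.filter (fun σ : Fin n ≃ E =>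
        σ ⟨0, by omega⟩ = e₀ ∧ ∀ i j : Fin n, (j : ℕ) = ((i : ℕ) + 1) % n → rng (σ i) = src (σ j))).card
      ≤ Nat.factorial (n - 2) := by
  obtain ⟨m, rfl⟩ : ∃ m, n = m + 2 := ⟨n - 2, by omega⟩
  by_cases hloops : ∃ f, f ≠ e₀ ∧ src f ≠ rng f
  · obtain ⟨f, hfe, hf⟩ := hloops
    exact card_le_factorial_of_src_ne_rng hcard hfe hf _ fun σ hσ => (mem_filter.1 hσ).2
  · push Not at hloops
    refine (card_eq_zero.2 (eq_empty_of_forall_notMem fun σ hσ => ?_)).trans_le (Nat.zero_le _)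
    obtain ⟨h0, hσ⟩ : σ 0 = e₀ ∧ IsClosedWalk src rng σ := (mem_filter.1 hσ).2
    have hsrc : ∀ e, src e = rng e₀ := fun e => by
      rw [← σ.apply_symm_apply e, ← h0]
      exact hσ.src_eq_rng_zero (fun i hi => hloops _ (by rwa [← h0, σ.injective.ne_iff])) _
    have := hdeg (rng e₀)
    simp only [hsrc, filter_true, card_univ, hcard] at this
    omega
end

section
/- In the Wright-Fisher model with population sizes (M_n), if ∑_{n≥1} 1/M_n = ∞, then almost surely the proportion process Y_n converges to a random variable Y_∞ taking values in {0,1} almost surely (i.e., fixation occurs almost surely). -/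
/-!
Since `M (n + 1) Y (n + 1)` is conditionally `Binomial(M (n + 1), Y n)`, the moments of the
Bernstein basis show that `Y` is a martingale and that the heterozygosity `H = Y (1 - Y)`
satisfies `E[H (n + 1) | F n] = (1 - 1 / M (n + 1)) H n`. Hence
`E[H n] = E[H 0] ∏ (1 - 1 / M k) ≤ exp (-∑ 1 / M k) → 0`. The bounded martingale `Y` converges
a.s. to some `Y∞`, and by dominated convergence `E[Y∞ (1 - Y∞)] = 0`, so `Y∞ ∈ {0, 1}` a.s.
-/

open MeasureTheory ProbabilityTheory Filter Topology Finset Polynomial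

lemma sum_eval_bernsteinPolynomial (m : ℕ) (p : ℝ) :
    ∑ k ∈ range (m + 1), (bernsteinPolynomial ℝ m k).eval p = 1 := by
  simpa [eval_finsetSum] using congrArg (eval p) (bernsteinPolynomial.sum ℝ m)

lemma sum_mul_eval_bernsteinPolynomial (m : ℕ) (p : ℝ) :
    ∑ k ∈ range (m + 1), (k : ℝ) * (bernsteinPolynomial ℝ m k).eval p = m * p := by
  simpa [eval_finsetSum] using congrArg (eval p) (bernsteinPolynomial.sum_smul ℝ m)

lemma sum_sq_mul_eval_bernsteinPolynomial (m : ℕ) (p : ℝ) :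
    ∑ k ∈ range (m + 1), (m * p - k) ^ 2 * (bernsteinPolynomial ℝ m k).eval p
      = m * p * (1 - p) := by
  simpa [eval_finsetSum] using congrArg (eval p) (bernsteinPolynomial.variance ℝ m)

lemma sum_div_mul_eval_bernsteinPolynomial {m : ℕ} (hm : m ≠ 0) (p : ℝ) :
    ∑ k ∈ range (m + 1), (k / m : ℝ) * (bernsteinPolynomial ℝ m k).eval p = p := by
  have hm' : (m : ℝ) ≠ 0 := Nat.cast_ne_zero.2 hm
  simp_rw [div_mul_eq_mul_div, ← sum_div, sum_mul_eval_bernsteinPolynomial]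
  field_simp

lemma sum_div_mul_one_sub_div_mul_eval_bernsteinPolynomial {m : ℕ} (hm : m ≠ 0) (p : ℝ) :
    ∑ k ∈ range (m + 1), (k / m : ℝ) * (1 - k / m) * (bernsteinPolynomial ℝ m k).eval p
      = (1 - 1 / m) * (p * (1 - p)) := by
  have hm' : (m : ℝ) ≠ 0 := Nat.cast_ne_zero.2 hm
  have hsplit (k : ℕ) : (k / m : ℝ) * (1 - k / m) * (bernsteinPolynomial ℝ m k).eval p
      = (1 - 2 * p) / m * (k * (bernsteinPolynomial ℝ m k).eval p)
        - 1 / m ^ 2 * ((m * p - k) ^ 2 * (bernsteinPolynomial ℝ m k).eval p)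
        + p ^ 2 * (bernsteinPolynomial ℝ m k).eval p := by
    field_simp; ring
  rw [sum_congr rfl fun k _ => hsplit k, sum_add_distrib, sum_sub_distrib, ← mul_sum, ← mul_sum,
    ← mul_sum, sum_mul_eval_bernsteinPolynomial, sum_sq_mul_eval_bernsteinPolynomial,
    sum_eval_bernsteinPolynomial]
  field_simp
  ring

lemma natCast_div_natCast_mem_Icc {k m : ℕ} (hk : k ≤ m) : (k / m : ℝ) ∈ Set.Icc 0 1 :=
  ⟨by positivity, div_le_one_of_le₀ (by exact_mod_cast hk) (by positivity)⟩

lemma mul_one_sub_mem_Icc {x : ℝ} (hx : x ∈ Set.Icc 0 1) : x * (1 - x) ∈ Set.Icc 0 1 :=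
  ⟨mul_nonneg hx.1 (sub_nonneg.2 hx.2), mul_le_one₀ hx.2 (sub_nonneg.2 hx.2) (sub_le_self _ hx.1)⟩

section

variable {Ω : Type*} {m0 : MeasurableSpace Ω} {μ : Measure Ω}

lemma comp_eq_sum_smul_indicator {X : Ω → ℝ} {m : ℕ} (hm : m ≠ 0)
    (hX : ∀ ω, ∃ k ≤ m, X ω = k / m) (f : ℝ → ℝ) :
    f ∘ X = ∑ k ∈ range (m + 1), f (k / m) • {ω | X ω * m = k}.indicator (fun _ => (1 : ℝ)) := by
  funext ω
  obtain ⟨j, hj, hXj⟩ := hX ω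
  have hXm : X ω * m = j := by rw [hXj, div_mul_cancel₀ _ (Nat.cast_ne_zero.2 hm)]
  simp only [Finset.sum_apply, Pi.smul_apply, Set.indicator_apply, Set.mem_ofPred, hXm,
    Nat.cast_inj, smul_eq_mul, mul_ite, mul_one, mul_zero, Function.comp_apply]
  rw [sum_ite_eq, if_pos (mem_range.2 (Nat.lt_add_one_iff.2 hj)), hXj]

lemma condExp_comp_ae_eq_sum_mul_eval_bernsteinPolynomial [IsFiniteMeasure μ]
    {G : MeasurableSpace Ω} {X p : Ω → ℝ} {m : ℕ} (hm : m ≠ 0) (hXm : Measurable[m0] X)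
    (hX : ∀ ω, ∃ k ≤ m, X ω = k / m)
    (hlaw : ∀ k ≤ m, μ[{ω | X ω * m = k}.indicator (fun _ => (1 : ℝ)) | G]
      =ᵐ[μ] fun ω => (m.choose k : ℝ) * p ω ^ k * (1 - p ω) ^ (m - k))
    (f : ℝ → ℝ) :
    μ[f ∘ X | G] =ᵐ[μ]
      fun ω => ∑ k ∈ range (m + 1), f (k / m) * (bernsteinPolynomial ℝ m k).eval (p ω) := by
  rw [comp_eq_sum_smul_indicator hm hX f]
  have hlevel (k : ℕ) : MeasurableSet[m0] {ω | X ω * m = k} :=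
    hXm.mul_const _ (measurableSet_singleton _)
  refine (condExp_finsetSum (fun k _ =>
    ((integrable_const (μ := μ) (1 : ℝ)).indicator (hlevel k)).smul (f (k / m))) G).trans ?_
  refine ((eventuallyEq_sum fun k hk => (condExp_smul _ _ _).trans
      ((hlaw k (Nat.lt_add_one_iff.1 (mem_range.1 hk))).const_smul (f (k / m)))).trans (.of_eq ?_))
  funext ω
  simp [Finset.sum_apply, bernsteinPolynomial]

lemma integral_eq_prod_mul_integral_of_condExp_ae_eq {F : Filtration ℕ m0}
    [SigmaFiniteFiltration μ F] {Z : ℕ → Ω → ℝ} {c : ℕ → ℝ}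
    (hZ : ∀ n, μ[Z (n + 1) | F n] =ᵐ[μ] c n • Z n) (n : ℕ) :
    ∫ ω, Z n ω ∂μ = (∏ k ∈ range n, c k) * ∫ ω, Z 0 ω ∂μ := by
  induction n with
  | zero => simp
  | succ n ih =>
    calc ∫ ω, Z (n + 1) ω ∂μ = ∫ ω, (μ[Z (n + 1) | F n]) ω ∂μ := (integral_condExp (F.le n)).symm
      _ = c n * ∫ ω, Z n ω ∂μ := by
        rw [integral_congr_ae (hZ n), Pi.smul_def, integral_smul, smul_eq_mul]
      _ = (∏ k ∈ range (n + 1), c k) * ∫ ω, Z 0 ω ∂μ := by rw [ih, prod_range_succ]; ring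

lemma tendsto_prod_range_one_sub_of_not_summable {a : ℕ → ℝ} (ha₀ : ∀ k, 0 ≤ a k)
    (ha₁ : ∀ k, a k ≤ 1) (ha : ¬ Summable a) :
    Tendsto (fun n => ∏ k ∈ range n, (1 - a k)) atTop (𝓝 0) := by
  have hsum : Tendsto (fun n => ∑ k ∈ range n, a k) atTop atTop :=
    (not_summable_iff_tendsto_nat_atTop_of_nonneg ha₀).1 ha
  refine squeeze_zero (fun n => prod_nonneg fun k _ => sub_nonneg.2 (ha₁ k)) (fun n => ?_)
    (Real.tendsto_exp_neg_atTop_nhds_zero.comp hsum)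
  calc ∏ k ∈ range n, (1 - a k) ≤ ∏ k ∈ range n, Real.exp (-a k) :=
        prod_le_prod (fun k _ => sub_nonneg.2 (ha₁ k))
          fun k _ => by linarith [Real.add_one_le_exp (-a k)]
    _ = Real.exp (-∑ k ∈ range n, a k) := by rw [← Real.exp_sum, sum_neg_distrib]

lemma ae_eq_zero_of_tendsto_integral [IsFiniteMeasure μ] {g : ℕ → Ω → ℝ} {h : Ω → ℝ} {C : ℝ}
    (hg : ∀ n, AEStronglyMeasurable (g n) μ) (hgC : ∀ n ω, g n ω ∈ Set.Icc 0 C)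
    (hlim : ∀ᵐ ω ∂μ, Tendsto (fun n => g n ω) atTop (𝓝 (h ω)))
    (hint : Tendsto (fun n => ∫ ω, g n ω ∂μ) atTop (𝓝 0)) :
    h =ᵐ[μ] 0 := by
  have hnorm (n : ℕ) (ω : Ω) : ‖g n ω‖ ≤ C := by
    rw [Real.norm_of_nonneg (hgC n ω).1]; exact (hgC n ω).2
  have hh₀ : 0 ≤ᵐ[μ] h := hlim.mono fun ω hω => ge_of_tendsto' hω fun n => (hgC n ω).1
  have hh : Integrable h μ :=
    .of_bound (aestronglyMeasurable_of_tendsto_ae atTop hg hlim) C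
      (hlim.mono fun ω hω => le_of_tendsto' hω.norm fun n => hnorm n ω)
  have hzero : ∫ ω, h ω ∂μ = 0 := tendsto_nhds_unique
    (tendsto_integral_of_dominated_convergence (fun _ => C) hg (integrable_const C)
      (fun n => ae_of_all _ (hnorm n)) hlim) hint
  exact (integral_eq_zero_iff_of_nonneg_ae hh₀ hh).1 hzero

lemma MeasureTheory.Submartingale.ae_tendsto_limitProcess_of_norm_le [IsProbabilityMeasure μ]
    {F : Filtration ℕ m0} {f : ℕ → Ω → ℝ} (hf : Submartingale f F μ) {C : NNReal}
    (hC : ∀ n ω, ‖f n ω‖ ≤ C) :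
    ∀ᵐ ω ∂μ, Tendsto (fun n => f n ω) atTop (𝓝 (F.limitProcess f μ ω)) :=
  hf.ae_tendsto_limitProcess fun n => by
    simpa using eLpNorm_le_of_ae_bound (p := 1) (μ := μ) (ae_of_all _ (hC n))

end

theorem stmt_6_general {Ω : Type*} [m0 : MeasurableSpace Ω] (μ : Measure Ω)
    [IsProbabilityMeasure μ] (F : Filtration ℕ m0)
    (M : ℕ → ℕ) (hM : ∀ n, 0 < M n)
    (hdiv : ¬ Summable (fun n => 1 / (M n : ℝ)))
    (Y : ℕ → Ω → ℝ)
    (hadapt : Adapted F Y)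
    (hint : ∀ n, ∀ ω, ∃ k : ℕ, k ≤ M n ∧ Y n ω = (k : ℝ) / M n)
    (hbin : ∀ n, ∀ k : ℕ, k ≤ M (n + 1) →
      μ[Set.indicator {ω | Y (n + 1) ω * M (n + 1) = (k : ℝ)} (fun _ => (1 : ℝ)) | F n]
        =ᵐ[μ] fun ω =>
          ((M (n + 1)).choose k : ℝ) * Y n ω ^ k * (1 - Y n ω) ^ (M (n + 1) - k)) :
    ∃ Yinf : Ω → ℝ, ∀ᵐ ω ∂μ,
      Tendsto (fun n => Y n ω) atTop (𝓝 (Yinf ω)) ∧ (Yinf ω = 0 ∨ Yinf ω = 1) := by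
  have hY (n : ℕ) (ω : Ω) : Y n ω ∈ Set.Icc (0 : ℝ) 1 := by
    obtain ⟨k, hk, hYk⟩ := hint n ω
    exact hYk ▸ natCast_div_natCast_mem_Icc hk
  have hYnorm (n : ℕ) (ω : Ω) : ‖Y n ω‖ ≤ (1 : NNReal) := by
    rw [Real.norm_of_nonneg (hY n ω).1]; exact (hY n ω).2
  have hmeas (n : ℕ) : Measurable (Y n) := (hadapt n).mono (F.le n) le_rfl
  have hcond (n : ℕ) := condExp_comp_ae_eq_sum_mul_eval_bernsteinPolynomial (hM (n + 1)).ne'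
    (hmeas (n + 1)) (hint (n + 1)) (hbin n)
  have hmart : Martingale Y F μ :=
    martingale_nat hadapt.stronglyAdapted
      (fun n => .of_bound (hmeas n).aestronglyMeasurable 1 (ae_of_all _ (hYnorm n)))
      fun n => ((hcond n id).trans (.of_eq (funext fun ω =>
        sum_div_mul_eval_bernsteinPolynomial (hM (n + 1)).ne' (Y n ω)))).symm
  set H : ℕ → Ω → ℝ := fun n ω => Y n ω * (1 - Y n ω)
  have hH (n : ℕ) : μ[H (n + 1) | F n] =ᵐ[μ] (1 - 1 / (M (n + 1) : ℝ)) • H n :=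
    (hcond n fun x => x * (1 - x)).trans (.of_eq (funext fun ω =>
      sum_div_mul_one_sub_div_mul_eval_bernsteinPolynomial (hM (n + 1)).ne' (Y n ω)))
  have hHint : Tendsto (fun n => ∫ ω, H n ω ∂μ) atTop (𝓝 0) := by
    refine .congr (fun n => (integral_eq_prod_mul_integral_of_condExp_ae_eq hH n).symm) ?_
    simpa using (tendsto_prod_range_one_sub_of_not_summable (a := fun k => 1 / (M (k + 1) : ℝ))
      (fun k => by positivity)
      (fun k => div_le_one_of_le₀ (by exact_mod_cast hM (k + 1)) (by positivity))
      ((summable_nat_add_iff 1).not.2 hdiv)).mul_const (∫ ω, H 0 ω ∂μ)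
  have hconv := hmart.submartingale.ae_tendsto_limitProcess_of_norm_le hYnorm
  have hfix := ae_eq_zero_of_tendsto_integral (g := H)
    (fun n => ((hmeas n).mul (measurable_const.sub (hmeas n))).aestronglyMeasurable)
    (fun n ω => mul_one_sub_mem_Icc (hY n ω))
    (hconv.mono fun ω hω => hω.mul (tendsto_const_nhds.sub hω)) hHint
  refine ⟨F.limitProcess Y μ, ?_⟩
  filter_upwards [hconv, hfix] with ω hlim hω
  exact ⟨hlim, (mul_eq_zero.1 hω).imp id fun h => by linarith⟩

/-- Wright-Fisher model with `∑ 1/M n = ∞` (i.e. `1/M n` not summable): almost surely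
the proportion process `Y n` converges to a limit `Y∞` taking only the values 0 or 1
(fixation occurs almost surely). -/
theorem stmt_6 {Ω : Type*} [m0 : MeasurableSpace Ω] (μ : Measure Ω)
    [IsProbabilityMeasure μ] (F : Filtration ℕ m0)
    (M : ℕ → ℕ) (hM : ∀ n, 0 < M n)
    (hdiv : ¬ Summable (fun n => 1 / (M n : ℝ)))
    (Y : ℕ → Ω → ℝ)
    (hadapt : Adapted F Y)
    (hmeas : ∀ n, Measurable (Y n))
    (hrange : ∀ n, ∀ ω, Y n ω ∈ Set.Icc (0 : ℝ) 1)
    (hint : ∀ n, ∀ ω, ∃ k : ℕ, k ≤ M n ∧ Y n ω = (k : ℝ) / M n)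
    (hbin : ∀ n, ∀ k : ℕ, k ≤ M (n + 1) →
      μ[Set.indicator {ω | Y (n + 1) ω * M (n + 1) = (k : ℝ)} (fun _ => (1 : ℝ)) | F n]
        =ᵐ[μ] fun ω =>
          ((M (n + 1)).choose k : ℝ) * Y n ω ^ k * (1 - Y n ω) ^ (M (n + 1) - k)) :
    ∃ Yinf : Ω → ℝ, ∀ᵐ ω ∂μ,
      Tendsto (fun n => Y n ω) atTop (𝓝 (Yinf ω)) ∧ (Yinf ω = 0 ∨ Yinf ω = 1) :=
  stmt_6_general (m0 := m0) μ F M hM hdiv Y hadapt hint hbin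
end

section
/- In the Wright-Fisher model with population sizes (M_n) satisfying ∑_{n≥1} 1/M_n < ∞: for every ε > 0 and η > 0 there exists l such that for every F_l-measurable [0,1]-valued random variable Y_l consistent with the process and every L > l, P(|Y_L - Y_l| ≥ η) < ε. -/
/-!
Conditionally on `F n`, `M (n + 1) * Y (n + 1)` is binomial with parameters `M (n + 1)` and
`Y n`. The first two moments of the binomial law (Bernstein polynomial identities) give, for every
`F n`-measurable `Z`,
`E[(Y (n + 1) - Z)² | F n] = (Y n - Z)² + Y n (1 - Y n) / M (n + 1)`,
and `y (1 - y) ≤ 1 / 4`. Taking `Z = Y l` and telescoping,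
`E[(Y L - Y l)²] ≤ ∑_{l < j ≤ L} 1 / (4 M j)`, which is uniformly small in `L` once `l` is large,
since `∑ 1 / M j < ∞`. Chebyshev's inequality concludes.
-/

open MeasureTheory ProbabilityTheory Finset

namespace bernsteinPolynomial

section CommRing

variable {R : Type*} [CommRing R] (n : ℕ) (y : R)

lemma eval_eq (k : ℕ) :
    (bernsteinPolynomial R n k).eval y = n.choose k * y ^ k * (1 - y) ^ (n - k) := by
  simp [bernsteinPolynomial]

lemma sum_eval :
    ∑ k ∈ range (n + 1), (n.choose k : R) * y ^ k * (1 - y) ^ (n - k) = 1 := by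
  simpa [Polynomial.eval_finsetSum, eval_eq] using congrArg (Polynomial.eval y) (sum R n)

lemma sum_mul_eval :
    ∑ k ∈ range (n + 1), (k : R) * ((n.choose k : R) * y ^ k * (1 - y) ^ (n - k)) = n * y := by
  simpa [Polynomial.eval_finsetSum, eval_eq] using congrArg (Polynomial.eval y) (sum_smul R n)

lemma variance_eval :
    ∑ k ∈ range (n + 1), ((n : R) * y - k) ^ 2 * ((n.choose k : R) * y ^ k * (1 - y) ^ (n - k))
      = n * y * (1 - y) := by
  simpa [Polynomial.eval_finsetSum, eval_eq] using congrArg (Polynomial.eval y) (variance R n)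

end CommRing

lemma sum_div_sub_sq_mul_eval {K : Type*} [Field K] {n : ℕ} (hn : (n : K) ≠ 0) (y z : K) :
    ∑ k ∈ range (n + 1), ((k : K) / n - z) ^ 2 * ((n.choose k : K) * y ^ k * (1 - y) ^ (n - k))
      = (y - z) ^ 2 + y * (1 - y) / n := by
  set b : ℕ → K := fun k => (n.choose k : K) * y ^ k * (1 - y) ^ (n - k)
  have hsplit : ∀ k : ℕ, ((k : K) / n - z) ^ 2 * b k
      = ((n : K) * y - k) ^ 2 * b k / n ^ 2 + 2 * (y - z) / n * (k * b k)
        + (z ^ 2 - y ^ 2) * b k := by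
    intro k; field_simp; ring
  rw [sum_congr rfl fun k _ => hsplit k, sum_add_distrib, sum_add_distrib, ← sum_div, ← mul_sum,
    ← mul_sum, variance_eval, sum_mul_eval, sum_eval]
  field_simp
  ring

end bernsteinPolynomial

section CondBinomial

variable {Ω : Type*} {N : ℕ} {X : Ω → ℝ}

lemma comp_eq_sum_indicator (hN : N ≠ 0) (hX : ∀ ω, ∃ k ≤ N, X ω = k / N) (G : ℝ → Ω → ℝ) :
    (fun ω => G (X ω) ω)
      = ∑ k ∈ range (N + 1), {ω | X ω * N = (k : ℝ)}.indicator (G (k / N)) := by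
  funext ω
  obtain ⟨k₀, hk₀, hXω⟩ := hX ω
  have hmem : ∀ k : ℕ, X ω * N = k ↔ k = k₀ := by
    intro k
    rw [hXω, div_mul_cancel₀ _ (Nat.cast_ne_zero.2 hN)]
    exact_mod_cast eq_comm
  rw [Finset.sum_apply, sum_eq_single_of_mem k₀ (mem_range.2 (Nat.lt_succ_of_le hk₀))]
  · rw [Set.indicator_of_mem (s := {ω | X ω * N = (k₀ : ℝ)}) ((hmem k₀).2 rfl), hXω]
  · exact fun k _ hk => Set.indicator_of_notMem (s := {ω | X ω * N = (k : ℝ)})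
      (fun h => hk ((hmem k).1 h)) _

variable {m : MeasurableSpace Ω} [m0 : MeasurableSpace Ω] {μ : Measure Ω} {p Z : Ω → ℝ}

def IsCondBinomial (μ : Measure Ω) (m : MeasurableSpace Ω) (N : ℕ) (p X : Ω → ℝ) : Prop :=
  ∀ k : ℕ, k ≤ N → μ[{ω | X ω * N = (k : ℝ)}.indicator (fun _ => (1 : ℝ)) | m]
    =ᵐ[μ] fun ω => (N.choose k : ℝ) * p ω ^ k * (1 - p ω) ^ (N - k)

lemma IsCondBinomial.condExp_comp [IsFiniteMeasure μ] (h : IsCondBinomial μ m N p X) (hN : N ≠ 0)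
    (hX : ∀ ω, ∃ k ≤ N, X ω = k / N) (hXm : Measurable X) {G : ℝ → Ω → ℝ}
    (hGm : ∀ c, Measurable[m] (G c)) (hGi : ∀ c, Integrable (G c) μ) :
    μ[fun ω => G (X ω) ω | m] =ᵐ[μ] fun ω => ∑ k ∈ range (N + 1),
      G (k / N) ω * ((N.choose k : ℝ) * p ω ^ k * (1 - p ω) ^ (N - k)) := by
  set A : ℕ → Set Ω := fun k => {ω | X ω * N = (k : ℝ)}
  have hA : ∀ k, MeasurableSet (A k) :=
    fun k => measurableSet_eq_fun (hXm.mul_const _) measurable_const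
  have hind : ∀ k, (A k).indicator (G (k / N)) = G (k / N) * (A k).indicator (fun _ => 1) := by
    intro k; ext ω; simp [Set.indicator_apply]
  rw [comp_eq_sum_indicator hN hX]
  refine (condExp_finsetSum (fun k _ => (hGi _).indicator (hA k)) m).trans ?_
  refine (eventuallyEq_sum (g := fun (k : ℕ) ω =>
    G (k / N) ω * ((N.choose k : ℝ) * p ω ^ k * (1 - p ω) ^ (N - k))) fun k hk => ?_).trans
    (.of_eq (by ext ω; simp [Finset.sum_apply]))
  rw [hind k]
  refine (condExp_mul_of_stronglyMeasurable_left (hGm _).stronglyMeasurable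
    (hind k ▸ (hGi _).indicator (hA k)) ((integrable_const 1).indicator (hA k))).trans ?_
  filter_upwards [h k (Nat.lt_succ_iff.1 (mem_range.1 hk))] with ω hω
  exact congrArg (G (k / N) ω * ·) hω

lemma IsCondBinomial.condExp_sub_sq [IsFiniteMeasure μ] (h : IsCondBinomial μ m N p X)
    (hN : N ≠ 0) (hX : ∀ ω, ∃ k ≤ N, X ω = k / N) (hXm : Measurable X)
    (hZm : Measurable[m] Z) (hZ : MemLp Z 2 μ) :
    μ[fun ω => (X ω - Z ω) ^ 2 | m] =ᵐ[μ] fun ω => (p ω - Z ω) ^ 2 + p ω * (1 - p ω) / N :=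
  (h.condExp_comp (G := fun c ω => (c - Z ω) ^ 2) hN hX hXm
    (fun _ => (measurable_const.sub hZm).pow_const 2)
    (fun c => ((memLp_const c).sub hZ).integrable_sq)).trans <| .of_forall fun ω =>
      bernsteinPolynomial.sum_div_sub_sq_mul_eval (Nat.cast_ne_zero.2 hN) (p ω) (Z ω)

lemma IsCondBinomial.integral_sub_sq_le [IsProbabilityMeasure μ] (hm : m ≤ m0)
    (h : IsCondBinomial μ m N p X) (hN : N ≠ 0) (hX : ∀ ω, ∃ k ≤ N, X ω = k / N)
    (hXm : Measurable X) (hpm : Measurable[m] p) (hp : ∀ ω, p ω ∈ Set.Icc 0 1)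
    (hZm : Measurable[m] Z) (hZ : MemLp Z 2 μ) :
    ∫ ω, (X ω - Z ω) ^ 2 ∂μ ≤ ∫ ω, (p ω - Z ω) ^ 2 ∂μ + 1 / (4 * N) := by
  have hce := h.condExp_sub_sq hN hX hXm hZm hZ
  have hp2 : MemLp p 2 μ :=
    memLp_of_bounded (.of_forall hp) (hpm.mono hm le_rfl).aestronglyMeasurable 2
  have hpZ : Integrable (fun ω => (p ω - Z ω) ^ 2) μ := (hp2.sub hZ).integrable_sq
  have hvar : ∀ ω, p ω * (1 - p ω) / N ≤ 1 / (4 * N) := fun ω => by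
    rw [← div_div]
    gcongr
    nlinarith [sq_nonneg (2 * p ω - 1)]
  calc ∫ ω, (X ω - Z ω) ^ 2 ∂μ = ∫ ω, ((p ω - Z ω) ^ 2 + p ω * (1 - p ω) / N) ∂μ := by
        rw [← integral_condExp hm]; exact integral_congr_ae hce
    _ ≤ ∫ ω, ((p ω - Z ω) ^ 2 + 1 / (4 * N)) ∂μ :=
        integral_mono (integrable_condExp.congr hce) (hpZ.add (integrable_const _))
          fun ω => add_le_add_right (hvar ω) _
    _ = ∫ ω, (p ω - Z ω) ^ 2 ∂μ + 1 / (4 * N) := by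
        rw [integral_add hpZ (integrable_const _)]; simp

end CondBinomial

lemma integral_sub_sq_le_sum_Ioc {Ω : Type*} [m0 : MeasurableSpace Ω] {μ : Measure Ω}
    [IsProbabilityMeasure μ] {F : Filtration ℕ m0} {M : ℕ → ℕ} {Y : ℕ → Ω → ℝ}
    (hM : ∀ n, 0 < M n) (hadapt : Adapted F Y) (hmeas : ∀ n, Measurable (Y n))
    (hrange : ∀ n ω, Y n ω ∈ Set.Icc (0 : ℝ) 1) (hint : ∀ n ω, ∃ k ≤ M n, Y n ω = k / M n)
    (hstep : ∀ n, IsCondBinomial μ (F n) (M (n + 1)) (Y n) (Y (n + 1))) {l L : ℕ} (hlL : l ≤ L) :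
    ∫ ω, (Y L ω - Y l ω) ^ 2 ∂μ ≤ ∑ j ∈ Ioc l L, 1 / (4 * (M j : ℝ)) := by
  induction L, hlL using Nat.le_induction with
  | base => simp
  | succ n hln ih =>
    have hYl : MemLp (Y l) 2 μ :=
      memLp_of_bounded (.of_forall (hrange l)) (hmeas l).aestronglyMeasurable 2
    calc ∫ ω, (Y (n + 1) ω - Y l ω) ^ 2 ∂μ
        ≤ ∫ ω, (Y n ω - Y l ω) ^ 2 ∂μ + 1 / (4 * (M (n + 1) : ℝ)) :=
          (hstep n).integral_sub_sq_le (F.le n) (hM _).ne' (hint _) (hmeas _) (hadapt n)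
            (hrange n) ((hadapt l).mono (F.mono hln) le_rfl) hYl
      _ ≤ ∑ j ∈ Ioc l n, 1 / (4 * (M j : ℝ)) + 1 / (4 * (M (n + 1) : ℝ)) := by gcongr
      _ = ∑ j ∈ Ioc l (n + 1), 1 / (4 * (M j : ℝ)) := (sum_Ioc_succ_top hln _).symm

lemma Summable.exists_forall_abs_sum_Ioc_lt {f : ℕ → ℝ} (hf : Summable f) {δ : ℝ} (hδ : 0 < δ) :
    ∃ l, ∀ L, |∑ j ∈ Ioc l L, f j| < δ := by
  obtain ⟨s, hs⟩ := hf.vanishing (Metric.ball_mem_nhds 0 hδ)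
  refine ⟨s.sup id, fun L => ?_⟩
  have hdisj : Disjoint (Ioc (s.sup id) L) s :=
    disjoint_left.2 fun j hj hjs => (mem_Ioc.1 hj).1.not_ge (le_sup (f := id) hjs)
  simpa using hs _ hdisj

lemma sq_mul_measureReal_abs_ge_le_integral_sq {Ω : Type*} [MeasurableSpace Ω] {μ : Measure Ω}
    {f : Ω → ℝ} (hf : Integrable (fun ω => f ω ^ 2) μ) {η : ℝ} (hη : 0 ≤ η) :
    η ^ 2 * μ.real {ω | η ≤ |f ω|} ≤ ∫ ω, f ω ^ 2 ∂μ := by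
  have hset : {ω | η ≤ |f ω|} = {ω | η ^ 2 ≤ f ω ^ 2} := by
    ext ω; simp [sq_le_sq, abs_of_nonneg hη]
  rw [hset]
  exact mul_meas_ge_le_integral_of_nonneg (.of_forall fun ω => sq_nonneg _) hf _

/-- Wright-Fisher model with `∑ 1/M n < ∞`: for all `ε, η > 0` there is a level `l`
such that for every `L > l`, `P(|Y L - Y l| ≥ η) < ε`. -/
theorem stmt_7 {Ω : Type*} [m0 : MeasurableSpace Ω] (μ : Measure Ω)
    [IsProbabilityMeasure μ] (F : Filtration ℕ m0)
    (M : ℕ → ℕ) (hM : ∀ n, 0 < M n)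
    (hconv : Summable (fun n => 1 / (M n : ℝ)))
    (Y : ℕ → Ω → ℝ)
    (hadapt : Adapted F Y)
    (hmeas : ∀ n, Measurable (Y n))
    (hrange : ∀ n, ∀ ω, Y n ω ∈ Set.Icc (0 : ℝ) 1)
    (hint : ∀ n, ∀ ω, ∃ k : ℕ, k ≤ M n ∧ Y n ω = (k : ℝ) / M n)
    (hbin : ∀ n, ∀ k : ℕ, k ≤ M (n + 1) →
      μ[Set.indicator {ω | Y (n + 1) ω * M (n + 1) = (k : ℝ)} (fun _ => (1 : ℝ)) | F n]
        =ᵐ[μ] fun ω =>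
          ((M (n + 1)).choose k : ℝ) * Y n ω ^ k * (1 - Y n ω) ^ (M (n + 1) - k)) :
    ∀ ε > (0 : ℝ), ∀ η > (0 : ℝ), ∃ l : ℕ, ∀ L > l,
      (μ {ω | η ≤ |Y L ω - Y l ω|}).toReal < ε := by
  intro ε hε η hη
  have hsum : Summable fun j => 1 / (4 * (M j : ℝ)) :=
    (hconv.mul_left (1 / 4)).congr fun j => by ring
  obtain ⟨l, hl⟩ := hsum.exists_forall_abs_sum_Ioc_lt (mul_pos hε (pow_pos hη 2))
  refine ⟨l, fun L hL => ?_⟩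
  have hY : ∀ n, MemLp (Y n) 2 μ :=
    fun n => memLp_of_bounded (.of_forall (hrange n)) (hmeas n).aestronglyMeasurable 2
  have hcheb := sq_mul_measureReal_abs_ge_le_integral_sq (f := fun ω => Y L ω - Y l ω)
    ((hY L).sub (hY l)).integrable_sq hη.le
  have hsecond := integral_sub_sq_le_sum_Ioc hM hadapt hmeas hrange hint hbin hL.le
  have htail := (le_abs_self _).trans_lt (hl L)
  rw [measureReal_def] at hcheb
  exact lt_of_mul_lt_mul_left (by linarith) (sq_nonneg η)
end

section
/- Let B be a Bratteli diagram whose incidence matrix entries all lie in {1,...,r} and which is impartial with constant α ∈ (0,1): for every n, every v ∈ V_{n+1}, and every i ∈ {1,...,r}, the set V_n^{v,i} = {w ∈ V_n : f^{(n)}_{v,w} = i} satisfies |V_n^{v,i}| ≥ α|V_n|. Fix a level N, and let A ⊆ V_N be chosen randomly by including each vertex v independently with probability p_v, where |p_v - β| < δ for all v. Then the probability that A fails to be (β, δ+ε)-equitable is at most 2 r |V_{N+1}| e^{-2α|V_N|ε²}. -/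
/-!
Fix `v ∈ V_{N+1}` and `i`, and let `s = V_N^{v,i}`. Since every mean `p_w` lies within `δ` of `β`,
the average of the `Z_w` over `s` can leave `[β - δ - ε, β + δ + ε]` only if the centred sum
`∑_{w ∈ s} (Z_w - p_w)` has absolute value at least `|s| ε`. By Hoeffding's inequality this has
probability at most `2 exp (-2 |s| ε²)`, and impartiality gives `|s| ≥ α |V_N|`. A union bound
over the `r |V_{N+1}|` pairs `(v, i)` concludes.
-/

open MeasureTheory ProbabilityTheory

open scoped Classical

open Real

lemma card_mul_le_abs_sum_sub_of_lt_abs_average_sub {ι : Type*} {s : Finset ι} {x p : ι → ℝ}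
    {β δ ε : ℝ} (hp : ∀ i ∈ s, |p i - β| ≤ δ) (hfar : δ + ε < |(∑ i ∈ s, x i) / s.card - β|) :
    s.card * ε ≤ |∑ i ∈ s, (x i - p i)| := by
  rcases s.eq_empty_or_nonempty with rfl | hs
  · simp
  have hk : (0 : ℝ) < s.card := by exact_mod_cast hs.card_pos
  have hmean : |∑ i ∈ s, p i - s.card * β| ≤ s.card * δ := calc
    |∑ i ∈ s, p i - s.card * β| = |∑ i ∈ s, (p i - β)| := by simp [Finset.sum_sub_distrib]
    _ ≤ ∑ i ∈ s, |p i - β| := Finset.abs_sum_le_sum_abs _ _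
    _ ≤ ∑ _i ∈ s, δ := Finset.sum_le_sum hp
    _ = s.card * δ := by simp
  have hsum : s.card * (δ + ε) < |∑ i ∈ s, x i - s.card * β| := by
    rwa [div_sub' hk.ne', abs_div, abs_of_pos hk, lt_div_iff₀' hk] at hfar
  have htri : |∑ i ∈ s, x i - s.card * β|
      ≤ |∑ i ∈ s, (x i - p i)| + |∑ i ∈ s, p i - s.card * β| := by
    rw [Finset.sum_sub_distrib]
    exact abs_sub_le _ _ _
  linarith

lemma measureReal_biUnion_finset_le_card_mul {α β : Type*} [MeasurableSpace α] {μ : Measure α}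
    (t : Finset β) (E : β → Set α) {C : ℝ} (hE : ∀ q ∈ t, μ.real (E q) ≤ C) :
    μ.real (⋃ q ∈ t, E q) ≤ t.card * C :=
  (measureReal_biUnion_finset_le t E).trans (by simpa using Finset.sum_le_card_nsmul t _ C hE)

section Hoeffding

variable {Ω ι : Type*} [MeasurableSpace Ω] {μ : Measure Ω} [IsProbabilityMeasure μ]
  {X : ι → Ω → ℝ}

lemma measureReal_abs_sum_ge_le_of_iIndepFun (hindep : iIndepFun X μ) {c : NNReal}
    {s : Finset ι} (hX : ∀ i ∈ s, HasSubgaussianMGF (X i) c μ) {ε : ℝ} (hε : 0 ≤ ε) :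
    μ.real {ω | ε ≤ |∑ i ∈ s, X i ω|} ≤ 2 * exp (-ε ^ 2 / (2 * s.card * c)) := by
  have hupper := HasSubgaussianMGF.measure_sum_ge_le_of_iIndepFun hindep hX hε
  have hlower := HasSubgaussianMGF.measure_sum_ge_le_of_iIndepFun
    (hindep.comp (fun _ => Neg.neg) fun _ => measurable_neg) (fun i hi => (hX i hi).neg) hε
  have htails : {ω | ε ≤ |∑ i ∈ s, X i ω|}
      ⊆ {ω | ε ≤ ∑ i ∈ s, X i ω} ∪ {ω | ε ≤ ∑ i ∈ s, (Neg.neg ∘ X i) ω} := by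
    intro ω (hω : ε ≤ |_|)
    refine (le_abs'.mp hω).symm.imp id fun h => ?_
    show ε ≤ ∑ i ∈ s, -X i ω
    rw [Finset.sum_neg_distrib]
    linarith
  calc μ.real {ω | ε ≤ |∑ i ∈ s, X i ω|}
      ≤ μ.real {ω | ε ≤ ∑ i ∈ s, X i ω} + μ.real {ω | ε ≤ ∑ i ∈ s, (Neg.neg ∘ X i) ω} :=
        (measureReal_mono htails).trans (measureReal_union_le _ _)
    _ ≤ 2 * exp (-ε ^ 2 / (2 * ∑ i ∈ s, c)) := by linarith
    _ = 2 * exp (-ε ^ 2 / (2 * s.card * c)) := by simp [mul_assoc]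

lemma measureReal_abs_sum_sub_integral_ge_le_of_mem_Icc (hindep : iIndepFun X μ)
    (hmeas : ∀ i, AEMeasurable (X i) μ) (hX : ∀ i, ∀ᵐ ω ∂μ, X i ω ∈ Set.Icc (0 : ℝ) 1)
    (s : Finset ι) {ε : ℝ} (hε : 0 ≤ ε) :
    μ.real {ω | s.card * ε ≤ |∑ i ∈ s, (X i ω - μ[X i])|} ≤ 2 * exp (-2 * s.card * ε ^ 2) := by
  have hcentered : iIndepFun (fun i ω => X i ω - μ[X i]) μ :=
    hindep.comp (fun i x => x - ∫ ω, X i ω ∂μ) fun i => measurable_id.sub_const _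
  refine (measureReal_abs_sum_ge_le_of_iIndepFun hcentered
    (fun i _ => hasSubgaussianMGF_of_mem_Icc (hmeas i) (hX i)) (by positivity)).trans_eq ?_
  push_cast
  rw [sub_zero, norm_one]
  rcases eq_or_ne (s.card : ℝ) 0 with hs | hs
  · simp [hs]
  · field_simp

lemma measureReal_lt_abs_average_sub_le_of_mem_Icc (hindep : iIndepFun X μ)
    (hmeas : ∀ i, AEMeasurable (X i) μ) (hX : ∀ i, ∀ᵐ ω ∂μ, X i ω ∈ Set.Icc (0 : ℝ) 1)
    {s : Finset ι} {β δ ε : ℝ} (hmean : ∀ i ∈ s, |μ[X i] - β| ≤ δ) (hε : 0 ≤ ε) :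
    μ.real {ω | δ + ε < |(∑ i ∈ s, X i ω) / s.card - β|} ≤ 2 * exp (-2 * s.card * ε ^ 2) :=
  (measureReal_mono fun _ hfar => card_mul_le_abs_sum_sub_of_lt_abs_average_sub hmean hfar).trans
    (measureReal_abs_sum_sub_integral_ge_le_of_mem_Icc hindep hmeas hX s hε)

end Hoeffding

theorem stmt_10_general {Ω VN VN1 : Type*} [MeasurableSpace Ω] (μ : Measure Ω)
    [IsProbabilityMeasure μ] [Fintype VN] [Fintype VN1]
    (r : ℕ) (f : VN1 → VN → ℕ)
    (α : ℝ)
    (himp : ∀ (v : VN1) (i : ℕ), 1 ≤ i → i ≤ r →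
      α * Fintype.card VN ≤ ((Finset.univ.filter (fun w => f v w = i)).card : ℝ))
    (Z : VN → Ω → ℝ) (p : VN → ℝ) (β δ ε : ℝ) (hε : 0 < ε)
    (hmeas : ∀ w, Measurable (Z w))
    (hBern : ∀ w, ∀ᵐ ω ∂μ, Z w ω = 0 ∨ Z w ω = 1)
    (hmean : ∀ w, μ[Z w] = p w)
    (hp : ∀ w, |p w - β| < δ)
    (hindep : iIndepFun Z μ) :
    (μ {ω | ¬ ∀ (v : VN1) (i : ℕ), 1 ≤ i → i ≤ r →
        |(∑ w ∈ Finset.univ.filter (fun w => f v w = i), Z w ω) /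
            (((Finset.univ.filter (fun w => f v w = i)).card : ℝ)) - β| ≤ δ + ε}).toReal
      ≤ 2 * r * Fintype.card VN1 * Real.exp (-2 * α * Fintype.card VN * ε ^ 2) := by
  set block : VN1 × ℕ → Finset VN := fun q => Finset.univ.filter (fun w => f q.1 w = q.2)
  set far : VN1 × ℕ → Set Ω :=
    fun q => {ω | δ + ε < |(∑ w ∈ block q, Z w ω) / ((block q).card : ℝ) - β|}
  have hZ01 : ∀ w, ∀ᵐ ω ∂μ, Z w ω ∈ Set.Icc (0 : ℝ) 1 := fun w =>
    (hBern w).mono fun ω h => by rcases h with h | h <;> simp [h]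
  have hfar : ∀ q ∈ Finset.univ ×ˢ Finset.Icc 1 r,
      μ.real (far q) ≤ 2 * exp (-2 * α * Fintype.card VN * ε ^ 2) := by
    rintro ⟨v, i⟩ hq
    simp only [Finset.mem_product, Finset.mem_univ, Finset.mem_Icc, true_and] at hq
    refine (measureReal_lt_abs_average_sub_le_of_mem_Icc hindep (fun w => (hmeas w).aemeasurable) hZ01
      (fun w _ => hmean w ▸ (hp w).le) hε.le).trans ?_
    have hcard := himp v i hq.1 hq.2
    gcongr 2 * exp ?_
    nlinarith [sq_nonneg ε]
  refine (measureReal_mono (s₂ := ⋃ q ∈ Finset.univ ×ˢ Finset.Icc 1 r, far q) ?cover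
    (measure_ne_top μ _)).trans ((measureReal_biUnion_finset_le_card_mul _ _ hfar).trans_eq ?count)
  case cover =>
    intro ω hω
    push Not at hω
    obtain ⟨v, i, hi1, hir, hvi⟩ := hω
    exact Set.mem_iUnion₂.mpr ⟨(v, i), by simp [hi1, hir], hvi⟩
  case count =>
    simp only [Finset.card_product, Finset.card_univ, Nat.card_Icc]
    push_cast
    ring

/-- Lemma 4.9: Let `B` be an impartial Bratteli diagram (entries of the incidence
matrix between levels `N` and `N+1` lie in `{1,…,r}`, and each set
`V_N^{v,i} = {w : f v w = i}` has size at least `α |V_N|`).  If `A ⊆ V_N` is random,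
each vertex `w` included independently with probability `p w` where `|p w - β| < δ`
(inclusion indicated by the Bernoulli variable `Z w`), then the probability that `A`
fails to be `(β, δ+ε)`-equitable is at most `2 r |V_{N+1}| exp(-2 α |V_N| ε²)`. -/
theorem stmt_10 {Ω VN VN1 : Type*} [MeasurableSpace Ω] (μ : Measure Ω)
    [IsProbabilityMeasure μ] [Fintype VN] [Fintype VN1]
    (r : ℕ) (hr : 0 < r) (f : VN1 → VN → ℕ)
    (hf : ∀ v w, 1 ≤ f v w ∧ f v w ≤ r)
    (α : ℝ) (hα : 0 < α) (hα1 : α < 1)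
    (himp : ∀ (v : VN1) (i : ℕ), 1 ≤ i → i ≤ r →
      α * Fintype.card VN ≤ ((Finset.univ.filter (fun w => f v w = i)).card : ℝ))
    (Z : VN → Ω → ℝ) (p : VN → ℝ) (β δ ε : ℝ) (hε : 0 < ε) (hδ : 0 < δ)
    (hmeas : ∀ w, Measurable (Z w))
    (hBern : ∀ w, ∀ᵐ ω ∂μ, Z w ω = 0 ∨ Z w ω = 1)
    (hmean : ∀ w, μ[Z w] = p w)
    (hp : ∀ w, |p w - β| < δ)
    (hindep : iIndepFun Z μ) :
    (μ {ω | ¬ ∀ (v : VN1) (i : ℕ), 1 ≤ i → i ≤ r →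
        |(∑ w ∈ Finset.univ.filter (fun w => f v w = i), Z w ω) /
            (((Finset.univ.filter (fun w => f v w = i)).card : ℝ)) - β| ≤ δ + ε}).toReal
      ≤ 2 * r * Fintype.card VN1 * Real.exp (-2 * α * Fintype.card VN * ε ^ 2) :=
  stmt_10_general μ r f α himp Z p β δ ε hε hmeas hBern hmean hp hindep
end

section
/- Consider the infinite Pólya-type scheme: for each n, vertices of V_{n+1} independently each select a uniformly random parent in V_n, where |V_n| = M_n and ∑_n 1/M_n < ∞. Fix levels n_1 < n_2 < ... with M_{n_k} > 4^k such that, splitting alleles in half at each level n_k, inequality (proportion drift) |Y_{n_{k+1}} − Y_{n_k}| < 4^{-(k+1)} holds for all 2^k alleles simultaneously with probability at least 1 − κ. Then with probability at least 1 − κ, every allele class persists at all levels (the corresponding vertex sets A_s are nonempty for all finite binary strings s), and hence the set of infinite ancestral lines (maximal paths) is uncountable. -/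
/-!
On the event where the proportion drift inequality holds, an induction on `|s|` shows that
`A s` has density at least `4^{-|s|}` in its level: the drift costs at most `4^{-(|s|+1)}`,
halving costs a factor two and one vertex, and `M (nk k) > 4^k` makes one vertex cheaper than
`4^{-k}`. So every `A s` is nonempty. For a branch `b : ℕ → Bool`, the classes along `b` form
an inverse system of nonempty finite sets under taking ancestors, so by König's lemma they are
threaded by an infinite ancestral line; distinct branches are eventually split into disjoint
halves, so this gives an injection of the uncountable set `ℕ → Bool` into the ancestral lines.
-/

open MeasureTheory ProbabilityTheory

/-- The ancestor at level `k` of the vertex `v` of level `l` (for `k ≤ l`), given the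
parent maps `π : ℕ → ℕ → ℕ` (`π n v` is the parent at level `n` of vertex `v` of
level `n+1`). -/
def ancestor (π : ℕ → ℕ → ℕ) (k : ℕ) : ℕ → ℕ → ℕ
  | l, v => if _ : k < l then ancestor π k (l - 1) (π (l - 1) v) else v
  termination_by l => l
  decreasing_by omega

/-- The descendants at level `nk (k+1)` of the set `As` of vertices of level `nk k`
(where `s` has length `k`): vertices of level `nk (k+1)` whose ancestor at level
`nk k` lies in `As`.  Vertices of level `n` are `0, …, M n - 1`. -/
def descendants (M : ℕ → ℕ) (nk : ℕ → ℕ) (π : ℕ → ℕ → ℕ) (s : List Bool)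
    (As : Finset ℕ) : Finset ℕ :=
  (Finset.range (M (nk (s.length + 1)))).filter
    (fun v => ancestor π (nk s.length) (nk (s.length + 1)) v ∈ As)

open CategoryTheory

instance : Uncountable (ℕ → Bool) := by
  rw [← Cardinal.aleph0_lt_mk_iff, ← Cardinal.power_def]
  simpa using Cardinal.cantor Cardinal.aleph0

theorem exists_seq_mem_of_mapsTo {α : Type*} {S : ℕ → Set α} (hfin : ∀ k, (S k).Finite)
    (hne : ∀ k, (S k).Nonempty) {f : ℕ → α → α} (hf : ∀ k, Set.MapsTo (f k) (S (k + 1)) (S k)) :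
    ∃ x : ℕ → α, ∀ k, x k ∈ S k ∧ f k (x (k + 1)) = x k := by
  let F : ℕᵒᵖ ⥤ Type _ := Functor.ofOpSequence (X := fun k => S k)
    fun k => TypeCat.ofHom (hf k).restrict
  have : ∀ k, Finite (F.obj k) := fun k => (hfin k.unop).to_subtype
  have : ∀ k, Nonempty (F.obj k) := fun k => (hne k.unop).to_subtype
  obtain ⟨x, hx⟩ := nonempty_sections_of_finite_inverse_system F
  refine ⟨fun k => (x ⟨k⟩).1, fun k => ⟨(x ⟨k⟩).2, ?_⟩⟩
  have := hx (homOfLE (Nat.le_add_right k 1)).op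
  rw [Functor.ofOpSequence_map_homOfLE_succ] at this
  exact congrArg Subtype.val this

theorem le_div_of_three_mul_le_div {a d m q : ℝ} (hm : 0 < m) (hqm : 1 ≤ q * m)
    (hd : 3 * q ≤ d / m) (had : d ≤ 2 * a + 1) : q ≤ a / m := by
  rw [le_div_iff₀ hm] at hd ⊢
  linarith

section Ancestor

variable (π : ℕ → ℕ → ℕ)

theorem ancestor_self (k v : ℕ) : ancestor π k k v = v := by
  rw [ancestor]; simp

theorem ancestor_succ {k l : ℕ} (h : k ≤ l) (v : ℕ) :
    ancestor π k (l + 1) v = ancestor π k l (π l v) := by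
  rw [ancestor]; simp [Nat.lt_succ_of_le h]

theorem ancestor_succ_self (l v : ℕ) : ancestor π l (l + 1) v = π l v := by
  rw [ancestor_succ π le_rfl, ancestor_self]

theorem ancestor_ancestor {k m l : ℕ} (hkm : k ≤ m) (hml : m ≤ l) (v : ℕ) :
    ancestor π k m (ancestor π m l v) = ancestor π k l v := by
  induction l, hml using Nat.le_induction generalizing v with
  | base => rw [ancestor_self]
  | succ l hml ih => rw [ancestor_succ π hml, ancestor_succ π (hkm.trans hml), ih]

theorem ancestor_lt {M : ℕ → ℕ} (hπ : ∀ n w, π n w < M n) {k l : ℕ} (h : k < l) (v : ℕ) :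
    ancestor π k l v < M k := by
  induction l, h using Nat.le_induction generalizing v with
  | base => rw [ancestor_succ_self]; exact hπ k v
  | succ l hkl ih => rw [ancestor_succ π (Nat.le_of_succ_le hkl)]; exact ih _

end Ancestor

def branchPrefix (b : ℕ → Bool) (k : ℕ) : List Bool := List.ofFn fun i : Fin k => b i

@[simp]
theorem branchPrefix_length (b : ℕ → Bool) (k : ℕ) : (branchPrefix b k).length = k := by
  simp [branchPrefix]

theorem branchPrefix_succ (b : ℕ → Bool) (k : ℕ) :
    branchPrefix b (k + 1) = branchPrefix b k ++ [b k] := by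
  rw [branchPrefix, List.ofFn_succ']
  simp [branchPrefix]

theorem branchPrefix_eq {b b' : ℕ → Bool} {k : ℕ} (h : ∀ i < k, b i = b' i) :
    branchPrefix b k = branchPrefix b' k := by
  simp only [branchPrefix, List.ofFn_inj]
  exact funext fun i => h i i.2

section SplitFamily

variable {M nk : ℕ → ℕ} {π : ℕ → ℕ → ℕ} {A : List Bool → Finset ℕ}

theorem ancestor_mem_of_mem_append
    (hAunion : ∀ s, A (s ++ [false]) ∪ A (s ++ [true]) = descendants M nk π s (A s))
    {s : List Bool} {c : Bool} {v : ℕ} (hv : v ∈ A (s ++ [c])) :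
    ancestor π (nk s.length) (nk (s.length + 1)) v ∈ A s := by
  have hv' : v ∈ descendants M nk π s (A s) := by
    rw [← hAunion s]
    cases c
    · exact Finset.mem_union_left _ hv
    · exact Finset.mem_union_right _ hv
  exact (Finset.mem_filter.1 hv').2

theorem disjoint_append_of_ne (hAdisj : ∀ s, Disjoint (A (s ++ [false])) (A (s ++ [true])))
    (s : List Bool) {c d : Bool} (h : c ≠ d) : Disjoint (A (s ++ [c])) (A (s ++ [d])) := by
  cases c <;> cases d
  all_goals first | exact absurd rfl h | exact hAdisj s | exact (hAdisj s).symm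

theorem card_descendants_le_two_mul_card_add_one
    (hAunion : ∀ s, A (s ++ [false]) ∪ A (s ++ [true]) = descendants M nk π s (A s))
    (hAdisj : ∀ s, Disjoint (A (s ++ [false])) (A (s ++ [true])))
    (hAhalf : ∀ s, (A (s ++ [false])).card = ((descendants M nk π s (A s)).card + 1) / 2)
    (s : List Bool) (c : Bool) :
    (descendants M nk π s (A s)).card ≤ 2 * (A (s ++ [c])).card + 1 := by
  have hsum := Finset.card_union_of_disjoint (hAdisj s)
  rw [hAunion s] at hsum
  have hhalf := hAhalf s
  cases c <;> omega

theorem inv_four_pow_le_density (hM0 : M 0 = 1) (hnk0 : nk 0 = 0)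
    (hnkbig : ∀ k, 4 ^ k < M (nk k))
    (hA0 : A [] = {0})
    (hAunion : ∀ s, A (s ++ [false]) ∪ A (s ++ [true]) = descendants M nk π s (A s))
    (hAdisj : ∀ s, Disjoint (A (s ++ [false])) (A (s ++ [true])))
    (hAhalf : ∀ s, (A (s ++ [false])).card = ((descendants M nk π s (A s)).card + 1) / 2)
    (hdrift : ∀ s : List Bool,
      |((descendants M nk π s (A s)).card : ℝ) / (M (nk (s.length + 1)))
        - ((A s).card : ℝ) / (M (nk s.length))| < ((4 : ℝ) ^ (s.length + 1))⁻¹)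
    (s : List Bool) :
    ((4 : ℝ) ^ s.length)⁻¹ ≤ ((A s).card : ℝ) / (M (nk s.length)) := by
  induction s using List.reverseRecOn with
  | nil => simp [hA0, hnk0, hM0]
  | append_singleton t c ih =>
    set q : ℝ := ((4 : ℝ) ^ (t.length + 1))⁻¹
    have hbig : (4 : ℝ) ^ (t.length + 1) < M (nk (t.length + 1)) := by
      exact_mod_cast hnkbig (t.length + 1)
    have hqm : 1 ≤ q * M (nk (t.length + 1)) := by
      rw [inv_mul_eq_div, one_le_div₀ (by positivity)]
      exact hbig.le
    have hparent : 4 * q ≤ ((A t).card : ℝ) / M (nk t.length) := by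
      simpa [q, pow_succ, mul_inv, ← mul_assoc] using ih
    have hdescendants : 3 * q ≤
        ((descendants M nk π t (A t)).card : ℝ) / M (nk (t.length + 1)) := by
      linarith [(abs_lt.1 (hdrift t)).1]
    have hcard : ((descendants M nk π t (A t)).card : ℝ) ≤ 2 * (A (t ++ [c])).card + 1 := by
      exact_mod_cast card_descendants_le_two_mul_card_add_one hAunion hAdisj hAhalf t c
    simpa using le_div_of_three_mul_le_div ((by positivity : (0 : ℝ) < _).trans hbig) hqm
      hdescendants hcard

theorem exists_line_through_branch (hrange : ∀ n w, π n w < M n) (hnkmono : StrictMono nk)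
    (hAunion : ∀ s, A (s ++ [false]) ∪ A (s ++ [true]) = descendants M nk π s (A s))
    (hne : ∀ s, (A s).Nonempty) (b : ℕ → Bool) :
    ∃ x : ℕ → ℕ, (∀ n, x n < M n) ∧ (∀ n, π n (x (n + 1)) = x n) ∧
      ∀ k, x (nk k) ∈ A (branchPrefix b k) := by
  obtain ⟨v, hv⟩ := exists_seq_mem_of_mapsTo (S := fun k => ↑(A (branchPrefix b k)))
    (f := fun k => ancestor π (nk k) (nk (k + 1))) (fun _ => Finset.finite_toSet _)
    (fun _ => Finset.coe_nonempty.2 (hne _)) fun k w hw => by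
      rw [Finset.mem_coe, branchPrefix_succ] at hw
      simpa using ancestor_mem_of_mem_append hAunion hw
  have hcompat : ∀ k j, k ≤ j → ancestor π (nk k) (nk j) (v j) = v k := by
    intro k j hkj
    induction j, hkj using Nat.le_induction with
    | base => exact ancestor_self π _ _
    | succ j hkj ih =>
      rw [← ancestor_ancestor π (hnkmono.monotone hkj) (hnkmono.monotone j.le_succ),
        (hv j).2, ih]
  have hlt : ∀ n, n < nk (n + 1) := fun n => n.lt_succ_self.trans_le (hnkmono.id_le _)
  refine ⟨fun n => ancestor π n (nk (n + 1)) (v (n + 1)), fun n => ancestor_lt π hrange (hlt n) _,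
    fun n => ?_, fun k => ?_⟩
  · rw [← ancestor_succ_self π n, ancestor_ancestor π n.le_succ (hlt (n + 1)).le,
      ← ancestor_ancestor π (hlt n).le (hnkmono.monotone (n + 1).le_succ), (hv (n + 1)).2]
  · change ancestor π (nk k) (nk (nk k + 1)) (v (nk k + 1)) ∈ _
    rw [hcompat k _ ((hnkmono.id_le k).trans (nk k).le_succ)]
    exact (hv k).1

theorem not_countable_ancestralLines (hrange : ∀ n w, π n w < M n) (hnkmono : StrictMono nk)
    (hAunion : ∀ s, A (s ++ [false]) ∪ A (s ++ [true]) = descendants M nk π s (A s))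
    (hAdisj : ∀ s, Disjoint (A (s ++ [false])) (A (s ++ [true])))
    (hne : ∀ s, (A s).Nonempty) :
    ¬ Set.Countable {x : ℕ → ℕ | (∀ n, x n < M n) ∧ ∀ n, π n (x (n + 1)) = x n} := by
  choose F hFlt hFparent hFmem using exists_line_through_branch hrange hnkmono hAunion hne
  intro hcount
  have := hcount.to_subtype
  refine not_injective_uncountable_countable
    (fun b => (⟨F b, hFlt b, hFparent b⟩ :
      {x : ℕ → ℕ | (∀ n, x n < M n) ∧ ∀ n, π n (x (n + 1)) = x n})) fun b b' hbb' => ?_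
  by_contra hbne
  have hex : ∃ i, b i ≠ b' i := Function.ne_iff.1 hbne
  -- At the first disagreement both branches leave the same class, through its two halves.
  set i := Nat.find hex
  have hprefix : branchPrefix b i = branchPrefix b' i :=
    branchPrefix_eq fun j hj => not_not.1 (Nat.find_min hex hj)
  have hmem := hFmem b (i + 1)
  have hmem' := hFmem b' (i + 1)
  rw [← show F b = F b' from congrArg Subtype.val hbb', branchPrefix_succ, ← hprefix] at hmem'
  rw [branchPrefix_succ] at hmem
  exact Finset.disjoint_left.1 (disjoint_append_of_ne hAdisj _ (Nat.find_spec hex)) hmem hmem'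

end SplitFamily

theorem stmt_14_general {Ω : Type*} [MeasurableSpace Ω] (μ : Measure Ω)
    (κ : ℝ)
    (M : ℕ → ℕ) (hM0 : M 0 = 1)
    (π : Ω → ℕ → ℕ → ℕ)
    (hrange : ∀ ω n v, π ω n v < M n)
    (nk : ℕ → ℕ) (hnk0 : nk 0 = 0) (hnkmono : StrictMono nk)
    (hnkbig : ∀ k, 4 ^ k < M (nk k))
    (A : Ω → List Bool → Finset ℕ)
    (hA0 : ∀ ω, A ω ([] : List Bool) = {0})
    (hAunion : ∀ ω s, A ω (s ++ [false]) ∪ A ω (s ++ [true])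
       = descendants M nk (π ω) s (A ω s))
    (hAdisj : ∀ ω s, Disjoint (A ω (s ++ [false])) (A ω (s ++ [true])))
    (hAhalf : ∀ ω s, (A ω (s ++ [false])).card
       = ((descendants M nk (π ω) s (A ω s)).card + 1) / 2)
    (hdrift : 1 - ENNReal.ofReal κ ≤
      μ {ω | ∀ s : List Bool,
        |((descendants M nk (π ω) s (A ω s)).card : ℝ) / (M (nk (s.length + 1)))
          - ((A ω s).card : ℝ) / (M (nk s.length))|
        < ((4 : ℝ) ^ (s.length + 1))⁻¹}) :
    1 - ENNReal.ofReal κ ≤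
      μ {ω | (∀ s : List Bool, (A ω s).Nonempty) ∧
        ¬ Set.Countable
          {x : ℕ → ℕ | (∀ n, x n < M n) ∧ ∀ n, π ω n (x (n + 1)) = x n}} := by
  refine hdrift.trans (measure_mono fun ω hω => ?_)
  have hne : ∀ s, (A ω s).Nonempty := fun s => Finset.nonempty_iff_ne_empty.2 fun hempty => by
    have hdensity := inv_four_pow_le_density hM0 hnk0 hnkbig (hA0 ω) (hAunion ω) (hAdisj ω)
      (hAhalf ω) hω s
    simp [hempty] at hdensity
    exact hdensity.not_gt (by positivity)
  exact ⟨hne, not_countable_ancestralLines (hrange ω) hnkmono (hAunion ω) (hAdisj ω) hne⟩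

/-- Theorem 4.4 (second half), main step: the evolve-and-split argument.  Vertices of
level `n+1` pick independent uniformly random parents at level `n` (`M n` vertices at
level `n`, `∑ 1/M n < ∞`, single root).  Fix levels `nk 0 = 0 < nk 1 < nk 2 < …` with
`M (nk k) > 4 ^ k`, and random allele classes `A ω s ⊆ V (nk |s|)`, indexed by binary
strings `s`, obtained by the evolve-and-split procedure: `A ω [] = {root}`, and
`A ω (s ++ [0])`, `A ω (s ++ [1])` split the descendants of `A ω s` into two halves.
Suppose that with probability at least `1 - κ` the proportion drift inequality
`| density(descendants of A_s) - density(A_s) | < 4^{-(|s|+1)}` holds for all strings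
`s` simultaneously.  Then with probability at least `1 - κ`, every allele class `A s`
is nonempty and the set of infinite ancestral lines (equivalently, of maximal paths of
the randomly ordered Bratteli diagram) is uncountable. -/
theorem stmt_14 {Ω : Type*} [MeasurableSpace Ω] (μ : Measure Ω)
    [IsProbabilityMeasure μ] (κ : ℝ) (hκ : 0 < κ)
    (M : ℕ → ℕ) (hM : ∀ n, 0 < M n) (hM0 : M 0 = 1)
    (hconv : Summable (fun n => 1 / (M n : ℝ)))
    (π : Ω → ℕ → ℕ → ℕ)
    (hrange : ∀ ω n v, π ω n v < M n)
    (hmeas : ∀ n v, Measurable (fun ω => π ω n v))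
    (hindep : iIndepFun
      (fun p : ℕ × ℕ => fun ω => π ω p.1 p.2) μ)
    (hunif : ∀ n v w, v < M (n + 1) → w < M n →
      μ {ω | π ω n v = w} = 1 / (M n : ENNReal))
    (nk : ℕ → ℕ) (hnk0 : nk 0 = 0) (hnkmono : StrictMono nk)
    (hnkbig : ∀ k, 4 ^ k < M (nk k))
    (A : Ω → List Bool → Finset ℕ)
    (hA0 : ∀ ω, A ω ([] : List Bool) = {0})
    (hAunion : ∀ ω s, A ω (s ++ [false]) ∪ A ω (s ++ [true])
       = descendants M nk (π ω) s (A ω s))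
    (hAdisj : ∀ ω s, Disjoint (A ω (s ++ [false])) (A ω (s ++ [true])))
    (hAhalf : ∀ ω s, (A ω (s ++ [false])).card
       = ((descendants M nk (π ω) s (A ω s)).card + 1) / 2)
    (hdrift : 1 - ENNReal.ofReal κ ≤
      μ {ω | ∀ s : List Bool,
        |((descendants M nk (π ω) s (A ω s)).card : ℝ) / (M (nk (s.length + 1)))
          - ((A ω s).card : ℝ) / (M (nk s.length))|
        < ((4 : ℝ) ^ (s.length + 1))⁻¹}) :
    1 - ENNReal.ofReal κ ≤
      μ {ω | (∀ s : List Bool, (A ω s).Nonempty) ∧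
        ¬ Set.Countable
          {x : ℕ → ℕ | (∀ n, x n < M n) ∧ ∀ n, π ω n (x (n + 1)) = x n}} :=
  stmt_14_general μ κ M hM0 π hrange nk hnk0 hnkmono hnkbig A hA0 hAunion hAdisj hAhalf hdrift
end
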